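/- arXiv:2510.00331 — 5 statements merged into one kernel-verified Lean document; each statement's English description precedes it below -/
import Mathlib

section
/- Suppose every edge of a 2-layer drawing (<_X, <_★) has at most k crossings. Then for any valley ⟨w, y, x⟩ (two edges (w,y) and (x,y) with w <_X x), the number of intrusive edges, i.e., edges (x', y') with y' ≠ y and w <_X x' <_X x, is at most 2k. -/
open scoped Classical

/-! Each intrusive edge `(x', y')` of the valley crosses `(w, y)` when `y' < y` and `(x, y)` when
`y < y'`, so the intrusive edges are covered by the crossings of two edges, at most `k` each. -/

open Finset

theorem Finset.card_filter_le_card_filter_add_card_filter {α : Type*} (s : Finset α)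
    {p q r : α → Prop} [DecidablePred p] [DecidablePred q] [DecidablePred r]
    (h : ∀ a ∈ s, r a → p a ∨ q a) :
    #(s.filter r) ≤ #(s.filter p) + #(s.filter q) :=
  calc #(s.filter r) ≤ #(s.filter fun a => p a ∨ q a) :=
        card_le_card (monotone_filter_right s fun a ha hr => h a ha hr)
    _ = #(s.filter p ∪ s.filter q) := by rw [filter_or]
    _ ≤ #(s.filter p) + #(s.filter q) := card_union_le _ _

theorem cross_or_cross_of_intrusive {X Y : Type*} [LinearOrder X] [LinearOrder Y]
    {cross : X × Y → X × Y → Prop}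
    (hcross : ∀ e f : X × Y,
      cross e f ↔ ((e.1 < f.1 ∧ f.2 < e.2) ∨ (f.1 < e.1 ∧ e.2 < f.2)))
    {w x : X} {y : Y} {f : X × Y} (hy : f.2 ≠ y) (hw : w < f.1) (hx : f.1 < x) :
    cross (w, y) f ∨ cross (x, y) f := by
  rw [hcross, hcross]
  rcases hy.lt_or_gt with hlt | hgt
  · exact Or.inl (Or.inl ⟨hw, hlt⟩)
  · exact Or.inr (Or.inr ⟨hx, hgt⟩)

theorem valley_intrusive_edges_le_general
    {X Y : Type*} [LinearOrder X] [LinearOrder Y]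
    (E : Finset (X × Y)) (k : ℕ)
    (cross : X × Y → X × Y → Prop)
    (hcross : ∀ e f : X × Y,
      cross e f ↔ ((e.1 < f.1 ∧ f.2 < e.2) ∨ (f.1 < e.1 ∧ e.2 < f.2)))
    (hk : ∀ e ∈ E, (E.filter (fun f => cross e f)).card ≤ k)
    (w x : X) (y : Y) (hwy : (w, y) ∈ E) (hxy : (x, y) ∈ E) :
    (E.filter (fun f => f.2 ≠ y ∧ w < f.1 ∧ f.1 < x)).card ≤ 2 * k :=
  calc #(E.filter fun f => f.2 ≠ y ∧ w < f.1 ∧ f.1 < x)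
      ≤ #(E.filter fun f => cross (w, y) f) + #(E.filter fun f => cross (x, y) f) :=
        E.card_filter_le_card_filter_add_card_filter fun _ _ ⟨hy, hw, hx⟩ =>
          cross_or_cross_of_intrusive hcross hy hw hx
    _ ≤ k + k := add_le_add (hk _ hwy) (hk _ hxy)
    _ = 2 * k := (two_mul k).symm

/-- If every edge of the 2-layer drawing `(<ₓ, <⋆)` has at most `k` crossings, then
for any valley `⟨w, y, x⟩` (edges `(w, y)` and `(x, y)` with `w <ₓ x`), the number of
intrusive edges, i.e. edges `(x', y')` with `y' ≠ y` and `w <ₓ x' <ₓ x`, is at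
most `2 * k`. -/
theorem valley_intrusive_edges_le
    {X Y : Type*} [LinearOrder X] [LinearOrder Y]
    (E : Finset (X × Y)) (k : ℕ)
    (cross : X × Y → X × Y → Prop)
    (hcross : ∀ e f : X × Y,
      cross e f ↔ ((e.1 < f.1 ∧ f.2 < e.2) ∨ (f.1 < e.1 ∧ e.2 < f.2)))
    (hk : ∀ e ∈ E, (E.filter (fun f => cross e f)).card ≤ k)
    (w x : X) (y : Y) (hwy : (w, y) ∈ E) (hxy : (x, y) ∈ E) (hwx : w < x) :
    (E.filter (fun f => f.2 ≠ y ∧ w < f.1 ∧ f.1 < x)).card ≤ 2 * k :=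
  valley_intrusive_edges_le_general E k cross hcross hk w x y hwy hxy
end

section
/- In any linear order < of the bunch Z of x, if the 2-vertices are not all first, odd vertices in the middle, and 4⊕-vertices last ordered ascending by degree, then the maximum over bunch edges e_i of the within-bunch crossing count cr(e_i, Z, <) is at least the corresponding maximum under the heuristic order (2-vertices first, odd vertices next, 4⊕-vertices last sorted ascending by degree). That is, the heuristic's bunch order minimizes the maximum within-bunch crossing count. -/
open scoped Classical

/-- Class of a bunch vertex: `0` for a 2-vertex, `1` for an odd vertex, and `2`
for a `4⁺`-vertex (even degree `≥ 4`). -/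
def bunchRank (d : ℕ) : ℕ := if d = 2 then 0 else if Odd d then 1 else 2

/-- Within-bunch crossing count of the bunch edge `eᵢ` under the order `σ`
(following the bunch-crossing formula):
`cr(eᵢ, Z, σ) = d - ⌊deg i / 2⌋ + aᵢ(σ) + bᵢ(σ)`, where `d = ∑ⱼ ⌊deg j / 2⌋`,
`aᵢ(σ)` counts 2-vertices after `i`, and `bᵢ(σ)` counts `4⁺`-vertices before `i`. -/
noncomputable def bunchCr {ℓ : ℕ} (deg : Fin ℓ → ℕ) (σ : Equiv.Perm (Fin ℓ))
    (i : Fin ℓ) : ℕ :=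
  (∑ j, deg j / 2) - deg i / 2
    + (Finset.univ.filter (fun j => deg j = 2 ∧ σ i < σ j)).card
    + (Finset.univ.filter (fun j => (Even (deg j) ∧ 4 ≤ deg j) ∧ σ j < σ i)).card

/-- Among all linear orders of the bunch, any order that places the 2-vertices
first, then the odd vertices, then the `4⁺`-vertices sorted ascending by degree
(the heuristic's order `σA`) minimizes the maximum within-bunch crossing
count. -/
theorem heuristic_bunch_order_minimizes_max
    {ℓ : ℕ} (deg : Fin ℓ → ℕ) (hdeg : ∀ i, 1 ≤ deg i)
    (σA : Equiv.Perm (Fin ℓ))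
    (hA1 : ∀ i j, bunchRank (deg i) < bunchRank (deg j) → σA i < σA j)
    (hA2 : ∀ i j, bunchRank (deg i) = 2 → bunchRank (deg j) = 2 →
      deg i < deg j → σA i < σA j)
    (σ : Equiv.Perm (Fin ℓ)) :
    Finset.univ.sup (bunchCr deg σA) ≤ Finset.univ.sup (bunchCr deg σ) := by
  classical
  apply Finset.sup_le
  intro i _
  have hrank2 : ∀ j : Fin ℓ, deg j = 2 → bunchRank (deg j) = 0 := by
    intro j h; simp [bunchRank, h]
  have hrankOdd : ∀ j : Fin ℓ, Odd (deg j) → bunchRank (deg j) = 1 := by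
    intro j h
    have h2 : deg j ≠ 2 := by
      rintro h2; rw [h2] at h; exact (by decide : ¬ Odd 2) h
    simp [bunchRank, h2, h]
  have hrank4 : ∀ j : Fin ℓ, Even (deg j) → 4 ≤ deg j → bunchRank (deg j) = 2 := by
    intro j he h4
    have h2 : deg j ≠ 2 := by omega
    have ho : ¬ Odd (deg j) := Nat.not_odd_iff_even.mpr he
    simp [bunchRank, h2, ho]
  by_cases h2 : deg i = 2
  · -- 2-vertex case
    set twos := Finset.univ.filter (fun j : Fin ℓ => deg j = 2) with htwos
    have hi : i ∈ twos := by simp [htwos, h2]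
    obtain ⟨k, hk, hkmin⟩ := Finset.exists_min_image twos (fun j => σ j) ⟨i, hi⟩
    have hk2 : deg k = 2 := by simpa [htwos] using hk
    have hsubA : Finset.univ.filter (fun j => deg j = 2 ∧ σA i < σA j) ⊆ twos.erase i := by
      intro j hj
      simp only [Finset.mem_filter, Finset.mem_univ, true_and] at hj
      refine Finset.mem_erase.mpr ⟨?_, by simp [htwos, hj.1]⟩
      rintro rfl; exact lt_irrefl _ hj.2
    have haA : (Finset.univ.filter (fun j => deg j = 2 ∧ σA i < σA j)).card ≤ twos.card - 1 := by
      calc (Finset.univ.filter (fun j => deg j = 2 ∧ σA i < σA j)).card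
          ≤ (twos.erase i).card := Finset.card_le_card hsubA
        _ = twos.card - 1 := Finset.card_erase_of_mem hi
    have hbA : (Finset.univ.filter (fun j => (Even (deg j) ∧ 4 ≤ deg j) ∧ σA j < σA i)).card = 0 := by
      rw [Finset.card_eq_zero, Finset.filter_eq_empty_iff]
      rintro j - ⟨⟨he, h4⟩, hlt⟩
      exact lt_asymm hlt (hA1 i j (by rw [hrank2 i h2, hrank4 j he h4]; omega))
    have hsubK : twos.erase k ⊆ Finset.univ.filter (fun j => deg j = 2 ∧ σ k < σ j) := by
      intro j hj
      obtain ⟨hne, hjt⟩ := Finset.mem_erase.mp hj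
      have hj2 : deg j = 2 := by simpa [htwos] using hjt
      have hle := hkmin j hjt
      have hne' : σ k ≠ σ j := fun h => hne (σ.injective h.symm)
      simp only [Finset.mem_filter, Finset.mem_univ, true_and]
      exact ⟨hj2, lt_of_le_of_ne hle hne'⟩
    have haK : twos.card - 1 ≤ (Finset.univ.filter (fun j => deg j = 2 ∧ σ k < σ j)).card := by
      calc twos.card - 1 = (twos.erase k).card := (Finset.card_erase_of_mem hk).symm
        _ ≤ _ := Finset.card_le_card hsubK
    have hfin : bunchCr deg σA i ≤ bunchCr deg σ k := by
      unfold bunchCr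
      omega
    exact le_trans hfin (Finset.le_sup (Finset.mem_univ k))
  · by_cases hodd : Odd (deg i)
    · -- odd vertex case
      have haA : (Finset.univ.filter (fun j => deg j = 2 ∧ σA i < σA j)).card = 0 := by
        rw [Finset.card_eq_zero, Finset.filter_eq_empty_iff]
        rintro j - ⟨hj2, hlt⟩
        exact lt_asymm hlt (hA1 j i (by rw [hrank2 j hj2, hrankOdd i hodd]; omega))
      have hbA : (Finset.univ.filter (fun j => (Even (deg j) ∧ 4 ≤ deg j) ∧ σA j < σA i)).card = 0 := by
        rw [Finset.card_eq_zero, Finset.filter_eq_empty_iff]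
        rintro j - ⟨⟨he, h4⟩, hlt⟩
        exact lt_asymm hlt (hA1 i j (by rw [hrankOdd i hodd, hrank4 j he h4]; omega))
      have hfin : bunchCr deg σA i ≤ bunchCr deg σ i := by
        unfold bunchCr
        omega
      exact le_trans hfin (Finset.le_sup (Finset.mem_univ i))
    · -- 4⁺ vertex case
      have heven : Even (deg i) := Nat.not_odd_iff_even.mp hodd
      have h4 : 4 ≤ deg i := by
        obtain ⟨r, hr⟩ := heven
        have := hdeg i
        omega
      set S := Finset.univ.filter (fun j : Fin ℓ => (Even (deg j) ∧ 4 ≤ deg j) ∧ σA j ≤ σA i) with hS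
      have hiS : i ∈ S := by simp [hS, heven, h4]
      have hSdeg : ∀ j ∈ S, deg j ≤ deg i := by
        intro j hj
        simp only [hS, Finset.mem_filter, Finset.mem_univ, true_and] at hj
        obtain ⟨⟨hje, hj4⟩, hle⟩ := hj
        by_contra hgt
        push_neg at hgt
        exact absurd (hA2 i j (hrank4 i heven h4) (hrank4 j hje hj4) hgt) (not_lt.mpr hle)
      have hbA : (Finset.univ.filter (fun j => (Even (deg j) ∧ 4 ≤ deg j) ∧ σA j < σA i)).card = S.card - 1 := by
        have heq : Finset.univ.filter (fun j => (Even (deg j) ∧ 4 ≤ deg j) ∧ σA j < σA i) = S.erase i := by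
          ext j
          simp only [hS, Finset.mem_filter, Finset.mem_univ, true_and, Finset.mem_erase]
          constructor
          · rintro ⟨h1, hlt⟩
            refine ⟨?_, h1, hlt.le⟩
            rintro rfl; exact lt_irrefl _ hlt
          · rintro ⟨hne, h1, hle⟩
            exact ⟨h1, lt_of_le_of_ne hle (fun h => hne (σA.injective h))⟩
        rw [heq, Finset.card_erase_of_mem hiS]
      have haA : (Finset.univ.filter (fun j => deg j = 2 ∧ σA i < σA j)).card = 0 := by
        rw [Finset.card_eq_zero, Finset.filter_eq_empty_iff]
        rintro j - ⟨hj2, hlt⟩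
        exact lt_asymm hlt (hA1 j i (by rw [hrank2 j hj2, hrank4 i heven h4]; omega))
      obtain ⟨k, hkS, hkmax⟩ := Finset.exists_max_image S (fun j => σ j) ⟨i, hiS⟩
      have hkdeg : deg k ≤ deg i := hSdeg k hkS
      have hsubK : S.erase k ⊆ Finset.univ.filter (fun j => (Even (deg j) ∧ 4 ≤ deg j) ∧ σ j < σ k) := by
        intro j hj
        obtain ⟨hne, hjS⟩ := Finset.mem_erase.mp hj
        have h1 : Even (deg j) ∧ 4 ≤ deg j := by
          have := Finset.mem_filter.mp hjS
          exact this.2.1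
        have hle := hkmax j hjS
        simp only [Finset.mem_filter, Finset.mem_univ, true_and]
        exact ⟨h1, lt_of_le_of_ne hle (fun h => hne (σ.injective h))⟩
      have hbK : S.card - 1 ≤ (Finset.univ.filter (fun j => (Even (deg j) ∧ 4 ≤ deg j) ∧ σ j < σ k)).card := by
        calc S.card - 1 = (S.erase k).card := (Finset.card_erase_of_mem hkS).symm
          _ ≤ _ := Finset.card_le_card hsubK
      have hdiv : deg k / 2 ≤ deg i / 2 := Nat.div_le_div_right hkdeg
      have hfin : bunchCr deg σA i ≤ bunchCr deg σ k := by
        unfold bunchCr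
        omega
      exact le_trans hfin (Finset.le_sup (Finset.mem_univ k))
end

section
/- If the one-sided local crossing number of (G, <_X) is k, then in the drawing produced by the median heuristic variant A (2-vertices' medians rounded up, others rounded down; ties broken with 2-vertices first sorted by heavy neighbor, then odd vertices, then 4⊕-vertices sorted ascending by degree), every median edge has at most k crossings. -/
open scoped Classical

/-- Edges `e` and `f` cross in the 2-layer drawing where `Y` is ordered by the
position map `ord` (i.e. `y₁ <ᵧ y₂ ↔ ord y₁ < ord y₂`). -/
def tlCross {X Y : Type*} [LinearOrder X] (ord : Y → ℕ) (e f : X × Y) : Prop :=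
  (e.1 < f.1 ∧ ord f.2 < ord e.2) ∨ (f.1 < e.1 ∧ ord e.2 < ord f.2)

/-- Number of edges of `E` crossing the edge `e` in the drawing given by `ord`. -/
noncomputable def tlCrN {X Y : Type*} [LinearOrder X] (E : Finset (X × Y))
    (ord : Y → ℕ) (e : X × Y) : ℕ :=
  (E.filter (tlCross ord e)).card

/-- Local crossing number of the drawing of `E` given by `ord`: the maximum,
over all edges, of the number of edges crossing it. -/
noncomputable def tlLcr {X Y : Type*} [LinearOrder X] (E : Finset (X × Y))
    (ord : Y → ℕ) : ℕ :=
  E.sup (tlCrN E ord)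

/-- Neighborhood in `X` of a vertex `y ∈ Y`. -/
noncomputable def tlNbrs {X Y : Type*} (E : Finset (X × Y)) (y : Y) : Finset X :=
  (E.filter (fun q => q.2 = y)).image Prod.fst

/-- Degree of a vertex `y ∈ Y`. -/
noncomputable def tlDeg {X Y : Type*} (E : Finset (X × Y)) (y : Y) : ℕ :=
  (tlNbrs E y).card

/-- Tie-breaking rank of `y`: `0` for 2-vertices, `1` for odd vertices, `2` for
`4⁺`-vertices (even degree `≥ 4`). -/
noncomputable def tlRank {X Y : Type*} (E : Finset (X × Y)) (y : Y) : ℕ :=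
  if tlDeg E y = 2 then 0 else if Odd (tlDeg E y) then 1 else 2

/-- `med` is the median assignment of variant `A`: `med y` is a neighbor of `y`;
for a 2-vertex the median is rounded up (it is the second neighbor, with exactly
one neighbor before it), otherwise it is rounded down (the middle neighbor, with
exactly `⌈deg y / 2⌉ - 1` neighbors before it). -/
def tlMedianA {X Y : Type*} [LinearOrder X] (E : Finset (X × Y)) (med : Y → X) : Prop :=
  ∀ y : Y, med y ∈ tlNbrs E y ∧
    (if tlDeg E y = 2 then ((tlNbrs E y).filter (fun w => w < med y)).card = 1
     else ((tlNbrs E y).filter (fun w => w < med y)).card + 1 = (tlDeg E y + 1) / 2)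

/-- `ordA` is an order of `Y` produced by variant `A` of the median heuristic:
vertices are ordered by their medians; within a bunch, 2-vertices come first,
sorted ascending by their heavy neighbors `heavy`, then odd vertices, then
`4⁺`-vertices sorted ascending by degree. -/
def tlVariantA {X Y : Type*} [LinearOrder X] (E : Finset (X × Y))
    (med heavy : Y → X) (ordA : Y → ℕ) : Prop :=
  Function.Injective ordA ∧
  (∀ y₁ y₂ : Y, med y₁ < med y₂ → ordA y₁ < ordA y₂) ∧
  (∀ y₁ y₂ : Y, med y₁ = med y₂ → tlRank E y₁ < tlRank E y₂ → ordA y₁ < ordA y₂) ∧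
  (∀ y₁ y₂ : Y, med y₁ = med y₂ → tlDeg E y₁ = 2 → tlDeg E y₂ = 2 →
    heavy y₁ < heavy y₂ → ordA y₁ < ordA y₂) ∧
  (∀ y₁ y₂ : Y, med y₁ = med y₂ → tlRank E y₁ = 2 → tlRank E y₂ = 2 →
    tlDeg E y₁ < tlDeg E y₂ → ordA y₁ < ordA y₂)

/-- `heavy` assigns to every 2-vertex its heavy neighbor: the unique neighbor
distinct from its median. -/
def tlHeavyNbr {X Y : Type*} [LinearOrder X] (E : Finset (X × Y))
    (med heavy : Y → X) : Prop :=
  ∀ y : Y, tlDeg E y = 2 → heavy y ∈ tlNbrs E y ∧ heavy y ≠ med y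

/-- The one-sided local crossing number of `(E, <ₓ)` is `k`: `k` is the minimum,
over all orders of `Y` (injective position maps), of the local crossing number
of the resulting drawing. -/
def tlOslcr {X Y : Type*} [LinearOrder X] (E : Finset (X × Y)) (k : ℕ) : Prop :=
  IsLeast {m : ℕ | ∃ ord : Y → ℕ, Function.Injective ord ∧ tlLcr E ord = m} k

/-!
For an edge `(m, u)` of any drawing, the edges at another vertex `z` that cross it are the
neighbors of `z` right of `m` if `z` is placed before `u`, and those left of `m` otherwise; so `z`
contributes at least the minimum of the two. Variant `A` places every vertex on its cheaper side of
the median edge `(med y, y)`, except inside the bunch of `med y`: when `y` is a 2-vertex, the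
2-vertices after it cost `1` instead of `0`, and when `y` is a `4⁺`-vertex, the `4⁺`-vertices
before it cost `deg / 2` instead of `deg / 2 - 1`. In an optimal drawing, let `u` be the first
(resp. last) of `y` and these exceptional vertices: the others lie on the same side of `u` and pay
the same there, and the ascending-degree tie-break makes exchanging `u` with `y` no worse. Hence
`(med y, y)` has no more crossings than `(med y, u)` in the optimal drawing.
-/

section TwoLayer

variable {X Y : Type*} [LinearOrder X] {E : Finset (X × Y)}

noncomputable def tlLeft (E : Finset (X × Y)) (m : X) (z : Y) : ℕ :=
  ((tlNbrs E z).filter (· < m)).card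

noncomputable def tlRight (E : Finset (X × Y)) (m : X) (z : Y) : ℕ :=
  ((tlNbrs E z).filter (m < ·)).card

/-- Number of edges at `z` crossing the edge `(m, u)` in the drawing given by `ord`. -/
noncomputable def tlCost (E : Finset (X × Y)) (ord : Y → ℕ) (m : X) (u z : Y) : ℕ :=
  if ord z < ord u then tlRight E m z else if ord u < ord z then tlLeft E m z else 0

omit [LinearOrder X] in
@[simp]
lemma mem_tlNbrs {w : X} {z : Y} : w ∈ tlNbrs E z ↔ (w, z) ∈ E := by
  simp [tlNbrs]

omit [LinearOrder X] in
lemma card_filter_tlNbrs (z : Y) (P : X → Prop) [DecidablePred P] :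
    ((tlNbrs E z).filter P).card = (E.filter fun f => P f.1 ∧ f.2 = z).card := by
  rw [tlNbrs, Finset.filter_image, Finset.card_image_of_injOn, Finset.filter_filter]
  · simp only [and_comm]
  · rintro ⟨a, b⟩ hab ⟨c, d⟩ hcd (rfl : a = c)
    simp only [Finset.coe_filter, Finset.mem_filter, Set.mem_ofPred_eq] at hab hcd
    rw [hab.1.2, hcd.1.2]

lemma tlLeft_add_tlRight {m : X} {z : Y} (hm : (m, z) ∈ E) :
    tlLeft E m z + tlRight E m z + 1 = tlDeg E z := by
  have hsplit : tlNbrs E z =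
      insert m ((tlNbrs E z).filter (· < m) ∪ (tlNbrs E z).filter (m < ·)) := by
    ext w
    simp only [Finset.mem_insert, Finset.mem_union, Finset.mem_filter]
    rcases lt_trichotomy w m with h | rfl | h
    · simp [h, h.ne, h.not_gt]
    · simp [hm]
    · simp [h, h.ne', h.not_gt]
  rw [tlDeg, hsplit, Finset.card_insert_of_notMem (by simp),
    Finset.card_union_of_disjoint (Finset.disjoint_filter.2 fun _ _ h => h.not_gt), tlLeft,
    tlRight]

lemma tlLeft_mono (z : Y) : Monotone fun m => tlLeft E m z := fun _ _ h =>
  Finset.card_le_card (Finset.monotone_filter_right _ fun _ _ hw => lt_of_lt_of_le hw h)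

lemma tlRight_anti (z : Y) : Antitone fun m => tlRight E m z := fun _ _ h =>
  Finset.card_le_card (Finset.monotone_filter_right _ fun _ _ hw => lt_of_le_of_lt h hw)

lemma tlLeft_add_one_le {a b : X} {z : Y} (ha : (a, z) ∈ E) (h : a < b) :
    tlLeft E a z + 1 ≤ tlLeft E b z := by
  rw [tlLeft, ← Finset.card_insert_of_notMem (a := a) (by simp)]
  refine Finset.card_le_card (Finset.insert_subset (by simp [ha, h]) ?_)
  exact Finset.monotone_filter_right _ fun _ _ hw => hw.trans h

lemma tlRight_add_one_le {a b : X} {z : Y} (hb : (b, z) ∈ E) (h : a < b) :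
    tlRight E b z + 1 ≤ tlRight E a z := by
  rw [tlRight, ← Finset.card_insert_of_notMem (a := b) (by simp)]
  refine Finset.card_le_card (Finset.insert_subset (by simp [hb, h]) ?_)
  exact Finset.monotone_filter_right _ fun _ _ hw => h.trans hw

lemma tlCrN_eq_sum_tlCost (ord : Y → ℕ) (m : X) (u : Y) :
    tlCrN E ord (m, u) = ∑ z ∈ E.image Prod.snd, tlCost E ord m u z := by
  rw [tlCrN, Finset.card_eq_sum_card_fiberwise fun f hf =>
    Finset.mem_image_of_mem Prod.snd (Finset.mem_filter.mp hf).1]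
  refine Finset.sum_congr rfl fun z _ => ?_
  have hfiber : ∀ P : X → Prop, [DecidablePred P] →
      (∀ w, tlCross ord (m, u) (w, z) ↔ P w) →
      ((E.filter (tlCross ord (m, u))).filter fun f => f.2 = z).card =
        ((tlNbrs E z).filter P).card := by
    intro P _ hP
    rw [card_filter_tlNbrs, Finset.filter_filter]
    congr 1
    refine Finset.filter_congr fun f _ => ?_
    constructor
    · rintro ⟨hc, rfl⟩; exact ⟨(hP _).1 hc, rfl⟩
    · rintro ⟨hc, rfl⟩; exact ⟨(hP _).2 hc, rfl⟩
  unfold tlCost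
  split_ifs with h₁ h₂
  · exact hfiber _ fun w => by simp [tlCross, h₁, h₁.not_gt]
  · exact hfiber _ fun w => by simp [tlCross, h₂, h₂.not_gt]
  · simpa using hfiber (fun _ => False) fun w => by simp [tlCross, h₁, h₂]

lemma tlCost_of_lt {ord : Y → ℕ} {m : X} {u z : Y} (h : ord z < ord u) :
    tlCost E ord m u z = tlRight E m z := if_pos h

lemma tlCost_of_gt {ord : Y → ℕ} {m : X} {u z : Y} (h : ord u < ord z) :
    tlCost E ord m u z = tlLeft E m z := by
  rw [tlCost, if_neg h.not_gt, if_pos h]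

lemma tlCost_self (ord : Y → ℕ) (m : X) (u : Y) : tlCost E ord m u u = 0 := by
  simp [tlCost]

lemma min_le_tlCost {ord : Y → ℕ} (hord : Function.Injective ord) (m : X) {u z : Y}
    (hzu : z ≠ u) : min (tlRight E m z) (tlLeft E m z) ≤ tlCost E ord m u z := by
  rcases (hord.ne hzu).lt_or_gt with h | h
  · rw [tlCost_of_lt h]; exact min_le_left _ _
  · rw [tlCost_of_gt h]; exact min_le_right _ _

/-- The swap of `y` and `u` matches the terms of the two sums: `u` takes over the role
of `y` and vice versa. -/
lemma tlCrN_le_tlCrN_of_exchange {ord ord' : Y → ℕ} (hord' : Function.Injective ord')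
    {m : X} {y u : Y} (hy : y ∈ E.image Prod.snd) (hu : u ∈ E.image Prod.snd)
    {S : Finset Y} (hyS : y ∈ S) (huS : u ∈ S) (g : Y → ℕ) (hgu : g u ≤ g y)
    (hle_g : ∀ z ∈ S, z ≠ y → tlCost E ord m y z ≤ g z)
    (hg_le : ∀ z ∈ S, z ≠ u → g z ≤ tlCost E ord' m u z)
    (hmin : ∀ z ∈ E.image Prod.snd, z ∉ S →
      tlCost E ord m y z ≤ min (tlRight E m z) (tlLeft E m z)) :
    tlCrN E ord (m, y) ≤ tlCrN E ord' (m, u) := by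
  have hswap : {z | Equiv.swap y u z ≠ z} ⊆ E.image Prod.snd := fun z hz => by
    by_contra hzB
    exact hz (Equiv.swap_apply_of_ne_of_ne (by rintro rfl; exact hzB hy)
      (by rintro rfl; exact hzB hu))
  rw [tlCrN_eq_sum_tlCost, tlCrN_eq_sum_tlCost,
    ← Equiv.Perm.sum_comp (Equiv.swap y u) _ (tlCost E ord' m u) hswap]
  refine Finset.sum_le_sum fun z hz => ?_
  by_cases hzy : z = y
  · rw [hzy, tlCost_self]; exact Nat.zero_le _
  by_cases hzu : z = u
  · subst hzu
    rw [Equiv.swap_apply_right]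
    exact (hle_g z huS hzy).trans (hgu.trans (hg_le y hyS (Ne.symm hzy)))
  rw [Equiv.swap_apply_of_ne_of_ne hzy hzu]
  by_cases hzS : z ∈ S
  · exact (hle_g z hzS hzy).trans (hg_le z hzS hzu)
  · exact (hmin z hz hzS).trans (min_le_tlCost hord' m hzu)

end TwoLayer

section Median

variable {X Y : Type*} [LinearOrder X] {E : Finset (X × Y)} {med : Y → X}

omit [LinearOrder X] in
lemma tlRank_cases (E : Finset (X × Y)) (z : Y) :
    (tlRank E z = 0 ∧ tlDeg E z = 2) ∨ (tlRank E z = 1 ∧ tlDeg E z % 2 = 1) ∨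
      (tlRank E z = 2 ∧ tlDeg E z % 2 = 0 ∧ tlDeg E z ≠ 2) := by
  unfold tlRank
  split_ifs with h₂ hodd
  · exact .inl ⟨rfl, h₂⟩
  · exact .inr (.inl ⟨rfl, Nat.odd_iff.mp hodd⟩)
  · exact .inr (.inr ⟨rfl, Nat.not_odd_iff.mp hodd, h₂⟩)

lemma tlMedianA.mem (hmed : tlMedianA E med) (z : Y) : (med z, z) ∈ E :=
  mem_tlNbrs.mp (hmed z).1

lemma tlMedianA.left_add_one_eq (hmed : tlMedianA E med) {z : Y} (hz : tlDeg E z ≠ 2) :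
    tlLeft E (med z) z + 1 = (tlDeg E z + 1) / 2 := by
  simpa [hz, tlLeft] using (hmed z).2

lemma tlMedianA.left_right_of_rank_eq_zero (hmed : tlMedianA E med) {z : Y}
    (hz : tlRank E z = 0) : tlLeft E (med z) z = 1 ∧ tlRight E (med z) z = 0 := by
  have hsum := tlLeft_add_tlRight (hmed.mem z)
  have hdeg : tlDeg E z = 2 := by rcases tlRank_cases E z with h | h | h <;> omega
  have hleft : tlLeft E (med z) z = 1 := by simpa [hdeg, tlLeft] using (hmed z).2
  omega

lemma tlMedianA.left_eq_right_of_rank_eq_one (hmed : tlMedianA E med) {z : Y}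
    (hz : tlRank E z = 1) : tlLeft E (med z) z = tlRight E (med z) z := by
  have hsum := tlLeft_add_tlRight (hmed.mem z)
  rcases tlRank_cases E z with h | h | h
  · omega
  · have := hmed.left_add_one_eq (by omega : tlDeg E z ≠ 2)
    omega
  · omega

lemma tlMedianA.left_right_of_rank_eq_two (hmed : tlMedianA E med) {z : Y}
    (hz : tlRank E z = 2) :
    tlLeft E (med z) z + 1 = tlRight E (med z) z ∧ 2 * tlRight E (med z) z = tlDeg E z := by
  have hsum := tlLeft_add_tlRight (hmed.mem z)
  rcases tlRank_cases E z with h | h | h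
  · omega
  · omega
  · have := hmed.left_add_one_eq h.2.2
    omega

lemma tlMedianA.right_le_left_add_one (hmed : tlMedianA E med) (z : Y) :
    tlRight E (med z) z ≤ tlLeft E (med z) z + 1 := by
  rcases tlRank_cases E z with h | h | h
  · have := hmed.left_right_of_rank_eq_zero h.1; omega
  · have := hmed.left_eq_right_of_rank_eq_one h.1; omega
  · have := hmed.left_right_of_rank_eq_two h.1; omega

lemma tlMedianA.left_le_right_add_one (hmed : tlMedianA E med) (z : Y) :
    tlLeft E (med z) z ≤ tlRight E (med z) z + 1 := by
  rcases tlRank_cases E z with h | h | h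
  · have := hmed.left_right_of_rank_eq_zero h.1; omega
  · have := hmed.left_eq_right_of_rank_eq_one h.1; omega
  · have := hmed.left_right_of_rank_eq_two h.1; omega

lemma tlMedianA.right_le_left_of_lt (hmed : tlMedianA E med) {m : X} {z : Y}
    (h : med z < m) : tlRight E m z ≤ tlLeft E m z :=
  calc tlRight E m z ≤ tlRight E (med z) z := tlRight_anti z h.le
    _ ≤ tlLeft E (med z) z + 1 := hmed.right_le_left_add_one z
    _ ≤ tlLeft E m z := tlLeft_add_one_le (hmed.mem z) h

lemma tlMedianA.left_le_right_of_gt (hmed : tlMedianA E med) {m : X} {z : Y}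
    (h : m < med z) : tlLeft E m z ≤ tlRight E m z :=
  calc tlLeft E m z ≤ tlLeft E (med z) z := tlLeft_mono z h.le
    _ ≤ tlRight E (med z) z + 1 := hmed.left_le_right_add_one z
    _ ≤ tlRight E m z := tlRight_add_one_le (hmed.mem z) h

end Median

section VariantA

variable {X Y : Type*} [LinearOrder X] {E : Finset (X × Y)} {med heavy : Y → X}
  {ordA ord' : Y → ℕ}

lemma tlVariantA.tlCost_le_min (hA : tlVariantA E med heavy ordA) (hmed : tlMedianA E med)
    {y z : Y} (hzy : z ≠ y)
    (h₀ : med z = med y → tlRank E z = 0 → ordA z < ordA y)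
    (h₂ : med z = med y → tlRank E z = 2 → ordA y < ordA z) :
    tlCost E ordA (med y) y z ≤ min (tlRight E (med y) z) (tlLeft E (med y) z) := by
  obtain ⟨hinj, hmlt, -, -, -⟩ := hA
  rcases lt_trichotomy (med z) (med y) with hlt | heq | hgt
  · rw [tlCost_of_lt (hmlt _ _ hlt)]
    exact le_min le_rfl (hmed.right_le_left_of_lt hlt)
  · rcases tlRank_cases E z with ⟨h, -⟩ | ⟨h, -⟩ | ⟨h, -⟩
    · rw [tlCost_of_lt (h₀ heq h), ← heq, (hmed.left_right_of_rank_eq_zero h).2]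
      exact Nat.zero_le _
    · have hLR := hmed.left_eq_right_of_rank_eq_one h
      rw [heq] at hLR
      rcases (hinj.ne hzy).lt_or_gt with h' | h'
      · rw [tlCost_of_lt h']; exact le_min le_rfl hLR.ge
      · rw [tlCost_of_gt h']; exact le_min hLR.le le_rfl
    · have hLR := (hmed.left_right_of_rank_eq_two h).1
      rw [heq] at hLR
      rw [tlCost_of_gt (h₂ heq h)]
      exact le_min (by omega) le_rfl
  · rw [tlCost_of_gt (hmlt _ _ hgt)]
    exact le_min (hmed.left_le_right_of_gt hgt) le_rfl

lemma tlVariantA.exists_tlCrN_le_of_rank_eq_zero (hA : tlVariantA E med heavy ordA)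
    (hmed : tlMedianA E med) (hord' : Function.Injective ord') {y : Y} (hy : tlRank E y = 0) :
    ∃ u, (med y, u) ∈ E ∧ tlCrN E ordA (med y, y) ≤ tlCrN E ord' (med y, u) := by
  set S := insert y ((E.image Prod.snd).filter
    fun z => med z = med y ∧ tlRank E z = 0 ∧ ordA y < ordA z) with hS
  obtain ⟨u, huS, hu_first⟩ := S.exists_min_image ord' (Finset.insert_nonempty _ _)
  have hmemS : ∀ {z}, z ∈ S → z ≠ y →
      z ∈ E.image Prod.snd ∧ med z = med y ∧ tlRank E z = 0 ∧ ordA y < ordA z := by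
    intro z hz hzy
    simpa [hS, hzy] using hz
  have hu : med u = med y ∧ tlRank E u = 0 := by
    by_cases huy : u = y
    · rw [huy]; exact ⟨rfl, hy⟩
    · exact (hmemS huS huy).2.imp_right And.left
  have huE : (med y, u) ∈ E := hu.1 ▸ hmed.mem u
  refine ⟨u, huE, tlCrN_le_tlCrN_of_exchange hord'
    (Finset.mem_image_of_mem _ (hmed.mem y)) (Finset.mem_image_of_mem _ huE)
    (Finset.mem_insert_self y _) huS (tlLeft E (med y)) ?_ ?_ ?_ ?_⟩
  · have hu_left := (hmed.left_right_of_rank_eq_zero hu.2).1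
    rw [hu.1] at hu_left
    rw [hu_left, (hmed.left_right_of_rank_eq_zero hy).1]
  · intro z hz hzy
    rw [tlCost_of_gt (hmemS hz hzy).2.2.2]
  · intro z hz hzu
    rw [tlCost_of_gt ((hu_first z hz).lt_of_ne (hord'.ne hzu.symm))]
  · intro z hzB hzS
    have hzy : z ≠ y := fun h => hzS (h ▸ Finset.mem_insert_self _ _)
    refine hA.tlCost_le_min hmed hzy (fun hzm hz₀ => ?_)
      (fun hzm hz₂ => hA.2.2.1 y z hzm.symm (by omega))
    refine (hA.1.ne hzy).lt_or_gt.resolve_right fun hyz => hzS ?_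
    exact Finset.mem_insert_of_mem (Finset.mem_filter.2 ⟨hzB, hzm, hz₀, hyz⟩)

lemma tlVariantA.tlCrN_le_tlCrN_of_rank_eq_one (hA : tlVariantA E med heavy ordA)
    (hmed : tlMedianA E med) (hord' : Function.Injective ord') {y : Y} (hy : tlRank E y = 1) :
    tlCrN E ordA (med y, y) ≤ tlCrN E ord' (med y, y) :=
  tlCrN_le_tlCrN_of_exchange hord' (Finset.mem_image_of_mem _ (hmed.mem y))
    (Finset.mem_image_of_mem _ (hmed.mem y)) (Finset.mem_singleton_self y)
    (Finset.mem_singleton_self y) 0 le_rfl (by simp) (by simp) fun z _ hz =>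
      hA.tlCost_le_min hmed (by simpa using hz) (fun hzm _ => hA.2.2.1 z y hzm (by omega))
        (fun hzm _ => hA.2.2.1 y z hzm.symm (by omega))

lemma tlVariantA.exists_tlCrN_le_of_rank_eq_two (hA : tlVariantA E med heavy ordA)
    (hmed : tlMedianA E med) (hord' : Function.Injective ord') {y : Y} (hy : tlRank E y = 2) :
    ∃ u, (med y, u) ∈ E ∧ tlCrN E ordA (med y, y) ≤ tlCrN E ord' (med y, u) := by
  set S := insert y ((E.image Prod.snd).filter
    fun z => med z = med y ∧ tlRank E z = 2 ∧ ordA z < ordA y) with hS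
  obtain ⟨u, huS, hu_last⟩ := S.exists_max_image ord' (Finset.insert_nonempty _ _)
  have hmemS : ∀ {z}, z ∈ S → z ≠ y →
      z ∈ E.image Prod.snd ∧ med z = med y ∧ tlRank E z = 2 ∧ ordA z < ordA y := by
    intro z hz hzy
    simpa [hS, hzy] using hz
  have hu : med u = med y ∧ tlRank E u = 2 := by
    by_cases huy : u = y
    · rw [huy]; exact ⟨rfl, hy⟩
    · exact (hmemS huS huy).2.imp_right And.left
  have huE : (med y, u) ∈ E := hu.1 ▸ hmed.mem u
  refine ⟨u, huE, tlCrN_le_tlCrN_of_exchange hord'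
    (Finset.mem_image_of_mem _ (hmed.mem y)) (Finset.mem_image_of_mem _ huE)
    (Finset.mem_insert_self y _) huS (tlRight E (med y)) ?_ ?_ ?_ ?_⟩
  · by_cases huy : u = y
    · rw [huy]
    have hdeg : tlDeg E u ≤ tlDeg E y := not_lt.mp fun hlt =>
      (hmemS huS huy).2.2.2.not_gt (hA.2.2.2.2 y u hu.1.symm hy hu.2 hlt)
    have hu_right := (hmed.left_right_of_rank_eq_two hu.2).2
    have hy_right := (hmed.left_right_of_rank_eq_two hy).2
    rw [hu.1] at hu_right
    omega
  · intro z hz hzy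
    rw [tlCost_of_lt (hmemS hz hzy).2.2.2]
  · intro z hz hzu
    rw [tlCost_of_lt ((hu_last z hz).lt_of_ne (hord'.ne hzu))]
  · intro z hzB hzS
    have hzy : z ≠ y := fun h => hzS (h ▸ Finset.mem_insert_self _ _)
    refine hA.tlCost_le_min hmed hzy
      (fun hzm hz₀ => hA.2.2.1 z y hzm (by omega)) (fun hzm hz₂ => ?_)
    refine (hA.1.ne hzy).lt_or_gt.resolve_left fun hzy' => hzS ?_
    exact Finset.mem_insert_of_mem (Finset.mem_filter.2 ⟨hzB, hzm, hz₂, hzy'⟩)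

lemma tlVariantA.tlCrN_le_tlLcr (hA : tlVariantA E med heavy ordA) (hmed : tlMedianA E med)
    (hord' : Function.Injective ord') (y : Y) :
    tlCrN E ordA (med y, y) ≤ tlLcr E ord' := by
  obtain ⟨u, hu, hle⟩ :
      ∃ u, (med y, u) ∈ E ∧ tlCrN E ordA (med y, y) ≤ tlCrN E ord' (med y, u) := by
    rcases tlRank_cases E y with ⟨hy, -⟩ | ⟨hy, -⟩ | ⟨hy, -⟩
    · exact hA.exists_tlCrN_le_of_rank_eq_zero hmed hord' hy
    · exact ⟨y, hmed.mem y, hA.tlCrN_le_tlCrN_of_rank_eq_one hmed hord' hy⟩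
    · exact hA.exists_tlCrN_le_of_rank_eq_two hmed hord' hy
  exact hle.trans (Finset.le_sup hu)

end VariantA

theorem variantA_median_edges_at_most_k_general
    {X Y : Type*} [LinearOrder X]
    (E : Finset (X × Y)) (k : ℕ)
    (med heavy : Y → X) (ordA : Y → ℕ)
    (hmed : tlMedianA E med)
    (hordA : tlVariantA E med heavy ordA)
    (hk : tlOslcr E k) :
    ∀ y : Y, tlCrN E ordA (med y, y) ≤ k := by
  obtain ⟨⟨ord', hord', rfl⟩, -⟩ := hk
  exact hordA.tlCrN_le_tlLcr hmed hord'

/-- If the one-sided local crossing number of `(G, <ₓ)` is `k` (every vertex of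
`Y` having degree at least 1), then in the drawing produced by variant `A` of
the median heuristic, every median edge `(med y, y)` has at most `k`
crossings. -/
theorem variantA_median_edges_at_most_k
    {X Y : Type*} [LinearOrder X]
    (E : Finset (X × Y)) (k : ℕ)
    (hdeg : ∀ y : Y, 1 ≤ tlDeg E y)
    (med heavy : Y → X) (ordA : Y → ℕ)
    (hmed : tlMedianA E med) (hheavy : tlHeavyNbr E med heavy)
    (hordA : tlVariantA E med heavy ordA)
    (hk : tlOslcr E k) :
    ∀ y : Y, tlCrN E ordA (med y, y) ≤ k :=
  variantA_median_edges_at_most_k_general E k med heavy ordA hmed hordA hk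
end

section
/- If the one-sided local crossing number of (G, <_X) is k, then in the drawing produced by the median heuristic variant A, every heavy edge (the non-median edge of a degree-2 vertex) has at most 3k crossings. -/
open scoped Classical

section AuxLemmas

variable {X Y : Type*}

lemma tl_mem_nbrs {E : Finset (X × Y)} {q : X × Y} (hq : q ∈ E) :
    q.1 ∈ tlNbrs E q.2 := by
  unfold tlNbrs
  exact Finset.mem_image_of_mem _ (Finset.mem_filter.mpr ⟨hq, rfl⟩)

lemma tl_nbrs_edge {E : Finset (X × Y)} {y : Y} {x : X} (hx : x ∈ tlNbrs E y) :
    (x, y) ∈ E := by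
  unfold tlNbrs at hx
  obtain ⟨q, hq, hq1⟩ := Finset.mem_image.mp hx
  obtain ⟨hqE, hq2⟩ := Finset.mem_filter.mp hq
  have hqe : q = (x, y) := Prod.ext hq1 hq2
  exact hqe ▸ hqE

lemma tl_cnt_eq (E : Finset (X × Y)) (y' : Y) (P : X → Prop) [DecidablePred P] :
    (E.filter fun q => q.2 = y' ∧ P q.1).card = ((tlNbrs E y').filter P).card := by
  classical
  have h1 : (E.filter fun q => q.2 = y' ∧ P q.1)
      = (E.filter fun q => q.2 = y').filter fun q => P q.1 := by
    rw [Finset.filter_filter]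
  rw [h1]
  unfold tlNbrs
  rw [Finset.filter_image]
  symm
  apply Finset.card_image_of_injOn
  intro q1 hq1 q2 hq2 hf
  have e1 : q1.2 = y' := (Finset.mem_filter.mp (Finset.mem_filter.mp hq1).1).2
  have e2 : q2.2 = y' := (Finset.mem_filter.mp (Finset.mem_filter.mp hq2).1).2
  exact Prod.ext hf (e1.trans e2.symm)

variable [LinearOrder X]

lemma tl_fiber_lt {E : Finset (X × Y)} (ord : Y → ℕ) (g : X × Y) (y' : Y)
    (hlt : ord y' < ord g.2) :
    (E.filter fun q => tlCross ord g q ∧ q.2 = y').card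
      = ((tlNbrs E y').filter fun w => g.1 < w).card := by
  rw [← tl_cnt_eq]
  congr 1
  apply Finset.filter_congr
  intro q _
  simp only [tlCross]
  constructor
  · rintro ⟨hc, hq2⟩
    refine ⟨hq2, ?_⟩
    rcases hc with ⟨h1, _⟩ | ⟨_, h2⟩
    · exact h1
    · rw [hq2] at h2; omega
  · rintro ⟨hq2, hx⟩
    exact ⟨Or.inl ⟨hx, by rw [hq2]; exact hlt⟩, hq2⟩

lemma tl_fiber_gt {E : Finset (X × Y)} (ord : Y → ℕ) (g : X × Y) (y' : Y)
    (hgt : ord g.2 < ord y') :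
    (E.filter fun q => tlCross ord g q ∧ q.2 = y').card
      = ((tlNbrs E y').filter fun w => w < g.1).card := by
  rw [← tl_cnt_eq]
  congr 1
  apply Finset.filter_congr
  intro q _
  simp only [tlCross]
  constructor
  · rintro ⟨hc, hq2⟩
    refine ⟨hq2, ?_⟩
    rcases hc with ⟨_, h2⟩ | ⟨h1, _⟩
    · rw [hq2] at h2; omega
    · exact h1
  · rintro ⟨hq2, hx⟩
    exact ⟨Or.inr ⟨hx, by rw [hq2]; exact hgt⟩, hq2⟩

lemma tl_card_split (s : Finset X) (v : X) :
    (s.filter fun w => w < v).card + (s.filter fun w => v ≤ w).card = s.card := by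
  classical
  have hdisj : Disjoint (s.filter fun w => w < v) (s.filter fun w => v ≤ w) := by
    rw [Finset.disjoint_left]
    intro a ha hb
    have h1 := (Finset.mem_filter.mp ha).2
    have h2 := (Finset.mem_filter.mp hb).2
    exact absurd h2 (not_le.mpr h1)
  have hunion : (s.filter fun w => w < v) ∪ (s.filter fun w => v ≤ w) = s := by
    ext w
    simp only [Finset.mem_union, Finset.mem_filter]
    constructor
    · rintro (⟨h, _⟩ | ⟨h, _⟩) <;> exact h
    · intro hw
      rcases lt_or_ge w v with h | h
      · exact Or.inl ⟨hw, h⟩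
      · exact Or.inr ⟨hw, h⟩
  rw [← Finset.card_union_of_disjoint hdisj, hunion]

lemma tl_card_split_le (s : Finset X) (v : X) :
    (s.filter fun w => w ≤ v).card + (s.filter fun w => v < w).card = s.card := by
  classical
  have hdisj : Disjoint (s.filter fun w => w ≤ v) (s.filter fun w => v < w) := by
    rw [Finset.disjoint_left]
    intro a ha hb
    have h1 := (Finset.mem_filter.mp ha).2
    have h2 := (Finset.mem_filter.mp hb).2
    exact absurd h2 (not_lt.mpr h1)
  have hunion : (s.filter fun w => w ≤ v) ∪ (s.filter fun w => v < w) = s := by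
    ext w
    simp only [Finset.mem_union, Finset.mem_filter]
    constructor
    · rintro (⟨h, _⟩ | ⟨h, _⟩) <;> exact h
    · intro hw
      rcases le_or_gt w v with h | h
      · exact Or.inl ⟨hw, h⟩
      · exact Or.inr ⟨hw, h⟩
  rw [← Finset.card_union_of_disjoint hdisj, hunion]

lemma tl_card_le_succ {s : Finset X} {v : X} (hv : v ∈ s) :
    (s.filter fun w => w ≤ v).card = (s.filter fun w => w < v).card + 1 := by
  classical
  have h : s.filter (fun w => w ≤ v) = insert v (s.filter fun w => w < v) := by
    ext w
    simp only [Finset.mem_filter, Finset.mem_insert]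
    constructor
    · rintro ⟨hw, hle⟩
      rcases eq_or_lt_of_le hle with rfl | hlt
      · exact Or.inl rfl
      · exact Or.inr ⟨hw, hlt⟩
    · rintro (rfl | ⟨hw, hlt⟩)
      · exact ⟨hv, le_refl _⟩
      · exact ⟨hw, le_of_lt hlt⟩
  rw [h, Finset.card_insert_of_notMem (by simp)]

end AuxLemmas

/-- If the one-sided local crossing number of `(G, <ₓ)` is `k` (every vertex of
`Y` having degree at least 1), then in the drawing produced by variant `A` of
the median heuristic, every heavy edge (the non-median edge of a degree-2
vertex) has at most `3k` crossings. -/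
theorem variantA_heavy_edges_at_most_3k
    {X Y : Type*} [LinearOrder X]
    (E : Finset (X × Y)) (k : ℕ)
    (hdeg : ∀ y : Y, 1 ≤ tlDeg E y)
    (med heavy : Y → X) (ordA : Y → ℕ)
    (hmed : tlMedianA E med) (hheavy : tlHeavyNbr E med heavy)
    (hordA : tlVariantA E med heavy ordA)
    (hk : tlOslcr E k) :
    ∀ e ∈ E, tlDeg E e.2 = 2 → e.1 ≠ med e.2 → tlCrN E ordA e ≤ 3 * k := by
  intro e he hd2 hne
  obtain ⟨⟨σ, hσinj, hσlcr⟩, -⟩ := hk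
  set m := med e.2 with hm
  -- basic facts about the 2-vertex e.2
  have hmem1 : e.1 ∈ tlNbrs E e.2 := tl_mem_nbrs he
  have hmedy : m ∈ tlNbrs E e.2 := (hmed e.2).1
  have hcnty : ((tlNbrs E e.2).filter fun w => w < m).card = 1 := by
    have h := (hmed e.2).2
    rw [if_pos hd2] at h
    exact h
  have hNcard : (tlNbrs E e.2).card = 2 := hd2
  have hNeq : tlNbrs E e.2 = {e.1, m} := by
    have hsub : ({e.1, m} : Finset X) ⊆ tlNbrs E e.2 := by
      intro w hw
      rcases Finset.mem_insert.mp hw with rfl | hw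
      · exact hmem1
      · rw [Finset.mem_singleton.mp hw]; exact hmedy
    exact (Finset.eq_of_subset_of_card_le hsub (by
      rw [Finset.card_insert_of_notMem (by simp [hne]), Finset.card_singleton]
      omega)).symm
  have hhm : e.1 < m := by
    by_contra hc
    have hempty : (tlNbrs E e.2).filter (fun w => w < m) = ∅ := by
      apply Finset.filter_eq_empty_iff.mpr
      intro w hw
      rw [hNeq] at hw
      rcases Finset.mem_insert.mp hw with rfl | hw
      · exact hc
      · rw [Finset.mem_singleton.mp hw]; exact lt_irrefl m
    rw [hempty] at hcnty
    simp at hcnty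
  have hheq : heavy e.2 = e.1 := by
    obtain ⟨hhmem, hhne⟩ := hheavy e.2 hd2
    rw [hNeq] at hhmem
    rcases Finset.mem_insert.mp hhmem with h | h
    · exact h
    · exact absurd (Finset.mem_singleton.mp h) hhne
  have hrank : tlRank E e.2 = 0 := by simp [tlRank, hd2]
  have hmE : (m, e.2) ∈ E := tl_nbrs_edge hmedy
  -- key counting inequality for vertices before e.2 in ordA
  have key1 : ∀ y' : Y, ordA y' < ordA e.2 →
      ((tlNbrs E y').filter fun w => m ≤ w).card
        ≤ ((tlNbrs E y').filter fun w => w < m).card := by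
    intro y' hlt
    obtain ⟨hvmem, hvcnt⟩ := hmed y'
    set s := tlNbrs E y' with hs
    set v := med y' with hv
    have hds : tlDeg E y' = s.card := by rw [hs]; rfl
    have hvm : v ≤ m := by
      by_contra hc
      push_neg at hc
      have := hordA.2.1 e.2 y' hc
      omega
    have hsplit_m := tl_card_split s m
    have hsplit_v := tl_card_split_le s v
    have hle_v := tl_card_le_succ hvmem
    rcases eq_or_lt_of_le hvm with heq | hltv
    · -- med y' = m forces y' to be a 2-vertex by rank tie-breaking
      have hd' : tlDeg E y' = 2 := by
        by_contra hd'
        have hr : 0 < tlRank E y' := by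
          unfold tlRank
          rw [if_neg hd']
          split <;> omega
        have := hordA.2.2.1 e.2 y' (by rw [← hm, ← hv, heq]) (by rw [hrank]; exact hr)
        omega
      rw [if_pos hd'] at hvcnt
      have hds2 : s.card = 2 := by omega
      have hsplit_v2 := tl_card_split s v
      rw [← heq]
      omega
    · -- med y' < m
      have h1 : (s.filter fun w => w ≤ v).card ≤ (s.filter fun w => w < m).card := by
        apply Finset.card_le_card
        intro w hw
        simp only [Finset.mem_filter] at hw ⊢
        exact ⟨hw.1, lt_of_le_of_lt hw.2 hltv⟩
      have h2 : (s.filter fun w => m ≤ w).card ≤ (s.filter fun w => v < w).card := by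
        apply Finset.card_le_card
        intro w hw
        simp only [Finset.mem_filter] at hw ⊢
        exact ⟨hw.1, lt_of_lt_of_le hltv hw.2⟩
      by_cases hd' : tlDeg E y' = 2
      · rw [if_pos hd'] at hvcnt
        have hds2 : s.card = 2 := by omega
        omega
      · rw [if_neg hd', hds] at hvcnt
        omega
  -- key counting inequality for vertices after e.2 in ordA
  have key2 : ∀ y' : Y, ordA e.2 < ordA y' →
      ((tlNbrs E y').filter fun w => w < e.1).card
        ≤ ((tlNbrs E y').filter fun w => m < w).card := by
    intro y' hlt
    obtain ⟨hvmem, hvcnt⟩ := hmed y'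
    set s := tlNbrs E y' with hs
    set v := med y' with hv
    have hds : tlDeg E y' = s.card := by rw [hs]; rfl
    have hvm : m ≤ v := by
      by_contra hc
      push_neg at hc
      have := hordA.2.1 y' e.2 hc
      omega
    have hsplit_v := tl_card_split s v
    have hle_v := tl_card_le_succ hvmem
    have hsplit_v2 := tl_card_split_le s v
    rcases eq_or_lt_of_le hvm with heq | hltv
    · -- med y' = m
      by_cases hd' : tlDeg E y' = 2
      · -- 2-vertex: heavy tie-breaking gives heavy y' ≥ e.1
        obtain ⟨hh'mem, hh'ne⟩ := hheavy y' hd'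
        have hge : ¬ heavy y' < heavy e.2 := by
          intro hcon
          have := hordA.2.2.2.1 y' e.2 (by rw [← hv, ← heq, hm]) hd' hd2 hcon
          omega
        rw [hheq] at hge
        have hseq : s = {heavy y', v} := by
          have hsub : ({heavy y', v} : Finset X) ⊆ s := by
            intro u hu
            rcases Finset.mem_insert.mp hu with rfl | hu
            · exact hh'mem
            · rw [Finset.mem_singleton.mp hu]; exact hvmem
          refine (Finset.eq_of_subset_of_card_le hsub ?_).symm
          rw [Finset.card_insert_of_notMem (by simp [hh'ne, hv]), Finset.card_singleton]
          omega
        have hempty : s.filter (fun w => w < e.1) = ∅ := by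
          apply Finset.filter_eq_empty_iff.mpr
          intro w hw
          rw [hseq] at hw
          rcases Finset.mem_insert.mp hw with rfl | hw
          · exact hge
          · rw [Finset.mem_singleton.mp hw]
            intro hcon
            rw [← heq] at hcon
            exact absurd hcon (lt_asymm hhm)
        rw [hempty]
        simp
      · -- deg ≠ 2, median edge goes to m itself
        rw [if_neg hd', hds] at hvcnt
        have h1 : (s.filter fun w => w < e.1).card ≤ (s.filter fun w => w < v).card := by
          apply Finset.card_le_card
          intro w hw
          simp only [Finset.mem_filter] at hw ⊢
          exact ⟨hw.1, lt_trans hw.2 (heq ▸ hhm)⟩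
        rw [heq]
        omega
    · -- m < med y'
      have h1 : (s.filter fun w => w < e.1).card ≤ (s.filter fun w => w < v).card := by
        apply Finset.card_le_card
        intro w hw
        simp only [Finset.mem_filter] at hw ⊢
        exact ⟨hw.1, lt_trans hw.2 (lt_trans hhm hltv)⟩
      have h2 : (s.filter fun w => v ≤ w).card ≤ (s.filter fun w => m < w).card := by
        apply Finset.card_le_card
        intro w hw
        simp only [Finset.mem_filter] at hw ⊢
        exact ⟨hw.1, lt_of_lt_of_le hltv hw.2⟩
      by_cases hd' : tlDeg E y' = 2
      · rw [if_pos hd'] at hvcnt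
        have hds2 : s.card = 2 := by omega
        omega
      · rw [if_neg hd', hds] at hvcnt
        omega
  -- fiberwise decomposition of crossing numbers
  have hsum : ∀ (ord : Y → ℕ) (g : X × Y),
      tlCrN E ord g
        = ∑ y' ∈ E.image Prod.snd,
            (E.filter fun q => tlCross ord g q ∧ q.2 = y').card := by
    intro ord g
    unfold tlCrN
    rw [Finset.card_eq_sum_card_fiberwise
      (f := Prod.snd) (t := E.image Prod.snd)
      (fun q hq => Finset.mem_image_of_mem _ (Finset.mem_filter.mp hq).1)]
    exact Finset.sum_congr rfl fun y' _ => by rw [Finset.filter_filter]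
  -- main charging inequality
  have hmain : tlCrN E ordA e ≤ tlCrN E σ e + 2 * tlCrN E σ (m, e.2) := by
    rw [hsum ordA e, hsum σ e, hsum σ (m, e.2), Finset.mul_sum, ← Finset.sum_add_distrib]
    apply Finset.sum_le_sum
    intro y' _
    by_cases hyy : y' = e.2
    · have hempty : E.filter (fun q => tlCross ordA e q ∧ q.2 = y') = ∅ := by
        apply Finset.filter_eq_empty_iff.mpr
        intro q _
        rintro ⟨hc, hq2⟩
        simp only [tlCross] at hc
        rcases hc with ⟨_, h2⟩ | ⟨_, h2⟩ <;> rw [hq2, hyy] at h2 <;> omega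
      rw [hempty]
      simp
    · have hAne : ordA y' ≠ ordA e.2 := fun hcon => hyy (hordA.1 hcon)
      have hSne : σ y' ≠ σ e.2 := fun hcon => hyy (hσinj hcon)
      rcases lt_or_gt_of_ne hAne with hA | hA
      · rw [tl_fiber_lt ordA e y' hA]
        rcases lt_or_gt_of_ne hSne with hS | hS
        · rw [tl_fiber_lt σ e y' hS]
          exact Nat.le_add_right _ _
        · have hfibM : (E.filter fun q => tlCross σ (m, e.2) q ∧ q.2 = y').card
              = ((tlNbrs E y').filter fun w => w < m).card :=
            tl_fiber_gt σ (m, e.2) y' hS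
          rw [tl_fiber_gt σ e y' hS, hfibM]
          have hsubs : (tlNbrs E y').filter (fun w => e.1 < w) ⊆
              ((tlNbrs E y').filter fun w => w < m)
                ∪ ((tlNbrs E y').filter fun w => m ≤ w) := by
            intro w hw
            simp only [Finset.mem_filter, Finset.mem_union] at hw ⊢
            rcases lt_or_ge w m with h | h
            · exact Or.inl ⟨hw.1, h⟩
            · exact Or.inr ⟨hw.1, h⟩
          have hc1 := Finset.card_le_card hsubs
          have hc2 := Finset.card_union_le
            ((tlNbrs E y').filter fun w => w < m)
            ((tlNbrs E y').filter fun w => m ≤ w)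
          have hk1 := key1 y' hA
          omega
      · rw [tl_fiber_gt ordA e y' hA]
        rcases lt_or_gt_of_ne hSne with hS | hS
        · have hfibM : (E.filter fun q => tlCross σ (m, e.2) q ∧ q.2 = y').card
              = ((tlNbrs E y').filter fun w => m < w).card :=
            tl_fiber_lt σ (m, e.2) y' hS
          rw [tl_fiber_lt σ e y' hS, hfibM]
          have hk2 := key2 y' hA
          omega
        · rw [tl_fiber_gt σ e y' hS]
          exact Nat.le_add_right _ _
  -- conclude with the optimal order bounds
  have hb1 : tlCrN E σ e ≤ k := by
    have h := Finset.le_sup (f := tlCrN E σ) he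
    unfold tlLcr at hσlcr
    omega
  have hb2 : tlCrN E σ (m, e.2) ≤ k := by
    have h := Finset.le_sup (f := tlCrN E σ) hmE
    unfold tlLcr at hσlcr
    omega
  omega
end

section
/- Given a yes-instance of 3-Partition with distinct elements satisfying T/4 < s < T/2, the constructed 2-layer drawing (with l, u-vertices of triplet S_1, p'_1, u-vertices of S_2, ..., p'_{n-1}, u-vertices of S_n, r on the free layer) has at most k = n²T + (n-1) crossings per edge: edges incident to l or r have at most n-1 crossings, the edge (p_i, p'_i) has exactly n²T + (i-1) crossings, and edges incident to u_i have at most n²T + (n-1) crossings. -/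
open scoped Classical

/-! The fixed layer `X` of the reduction is identified with `ℕ` (carrying its
natural order).  In the order `<ₓ` the vertices are
`B < p₁ < Q₁ < ⋯ < p_{n-1} < Q_{n-1} < A₁ < ⋯ < A_{3n} < Q''₁ < p''₁ < ⋯
< Q''_{n-1} < p''_{n-1} < B''`, where `|B| = |B''| = k + 1`, `|Qᵢ| = |Q''ᵢ| = nT`
and `|Aᵢ| = n·sᵢ`.  Indices of blocks are 0-based below. -/

/-- The `j`-th vertex of `B`. -/
def vB (j : ℕ) : ℕ := j

/-- The vertex `p_{i+1}`. -/
def vP (k n T i : ℕ) : ℕ := (k + 1) + i * (n * T + 1)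

/-- The `j`-th vertex of `Q_{i+1}`. -/
def vQ (k n T i j : ℕ) : ℕ := vP k n T i + 1 + j

/-- First position after the blocks `B, p₁, Q₁, …, p_{n-1}, Q_{n-1}`. -/
def baseA (k n T : ℕ) : ℕ := (k + 1) + (n - 1) * (n * T + 1)

/-- The `j`-th vertex of `A_{i+1}`. -/
def vA (k n T : ℕ) (s : ℕ → ℕ) (i j : ℕ) : ℕ :=
  baseA k n T + n * (∑ i' ∈ Finset.range i, s i') + j

/-- First position after the `A`-blocks (their total size is `n²T`). -/
def baseQ'' (k n T : ℕ) : ℕ := baseA k n T + n * n * T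

/-- The `j`-th vertex of `Q''_{i+1}`. -/
def vQ'' (k n T i j : ℕ) : ℕ := baseQ'' k n T + i * (n * T + 1) + j

/-- The vertex `p''_{i+1}`. -/
def vP'' (k n T i : ℕ) : ℕ := baseQ'' k n T + i * (n * T + 1) + n * T

/-- First position of the block `B''`. -/
def baseB'' (k n T : ℕ) : ℕ := baseQ'' k n T + (n - 1) * (n * T + 1)

/-- The `j`-th vertex of `B''`. -/
def vB'' (k n T j : ℕ) : ℕ := baseB'' k n T + j

/-! The free layer `Y = {l, u₁, …, u_{3n}, p'₁, …, p'_{n-1}, r}` is also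
identified with a subset of `ℕ` (these are just names; the order on `Y` is given
separately by a position map `posY`). -/

/-- The vertex `l`. -/
def yl : ℕ := 0

/-- The vertex `u_{j+1}`. -/
def yu (j : ℕ) : ℕ := j + 1

/-- The vertex `p'_{i+1}`. -/
def yp (n i : ℕ) : ℕ := 3 * n + 1 + i

/-- The vertex `r`. -/
def yr (n : ℕ) : ℕ := 4 * n + 1

/-- The boundary sequence `P₀ = l, Pᵢ = p'ᵢ (1 ≤ i ≤ n-1), Pₙ = r`. -/
def yBnd (n i : ℕ) : ℕ := if i = 0 then yl else if i = n then yr n else yp n (i - 1)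

/-- The edge set of the constructed 2-layer network: `l` is adjacent to all of
`B ∪ Q₁ ∪ ⋯ ∪ Q_{n-1}`, `r` to all of `B'' ∪ Q''₁ ∪ ⋯ ∪ Q''_{n-1}`, `p'ᵢ` to
`pᵢ` and `p''ᵢ`, and `uᵢ` to all of `Aᵢ`. -/
noncomputable def redEdges (n T k : ℕ) (s : ℕ → ℕ) : Finset (ℕ × ℕ) :=
  ((Finset.range (k + 1)).image fun j => (vB j, yl)) ∪
  (((Finset.range (n - 1)) ×ˢ (Finset.range (n * T))).image
    fun q => (vQ k n T q.1 q.2, yl)) ∪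
  (((Finset.range (n - 1)) ×ˢ (Finset.range (n * T))).image
    fun q => (vQ'' k n T q.1 q.2, yr n)) ∪
  ((Finset.range (k + 1)).image fun j => (vB'' k n T j, yr n)) ∪
  ((Finset.range (n - 1)).image fun i => (vP k n T i, yp n i)) ∪
  ((Finset.range (n - 1)).image fun i => (vP'' k n T i, yp n i)) ∪
  ((Finset.range (3 * n)).biUnion fun i =>
    (Finset.range (n * s i)).image fun j => (vA k n T s i j, yu i))

/-- Crossing of two edges, where the order of the free layer is given by the
position map `posY`. -/
def redCross (posY : ℕ → ℕ) (e f : ℕ × ℕ) : Prop :=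
  (e.1 < f.1 ∧ posY f.2 < posY e.2) ∨ (f.1 < e.1 ∧ posY e.2 < posY f.2)

/-- Number of edges crossing `e` in the drawing given by `posY`. -/
noncomputable def redCrN (n T k : ℕ) (s : ℕ → ℕ) (posY : ℕ → ℕ) (e : ℕ × ℕ) : ℕ :=
  ((redEdges n T k s).filter (redCross posY e)).card

open Finset

lemma band {M i i' j : ℕ} (hj : j < M) (hii' : i < i') : i * M + j < i' * M :=
  calc i * M + j < i * M + M := by omega
  _ = (i + 1) * M := by ring
  _ ≤ i' * M := Nat.mul_le_mul_right M hii'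

lemma pairinj {M i j i' j' : ℕ} (hj : j < M) (hj' : j' < M)
    (h : i * M + j = i' * M + j') : i = i' ∧ j = j' := by
  rcases lt_trichotomy i i' with h1 | h1 | h1
  · have := band hj h1; omega
  · subst h1; omega
  · have := band hj' h1; omega

lemma sum_part_lt (n T : ℕ) (s part : ℕ → ℕ)
    (hTsum : ∀ i, i < n → ∑ j ∈ (Finset.range (3*n)).filter (fun j => part j = i), s j = T) :
    ∀ i, i ≤ n → ∑ j ∈ (Finset.range (3*n)).filter (fun j => part j < i), s j = i * T := by
  intro i
  induction i with
  | zero => intro _; simp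
  | succ m ih =>
    intro hm
    have h1 := ih (by omega)
    have h2 := hTsum m (by omega)
    have key : ∑ j ∈ (range (3*n)).filter (fun j => part j < m+1), s j
        = ∑ j ∈ (range (3*n)).filter (fun j => part j < m), s j
          + ∑ j ∈ (range (3*n)).filter (fun j => part j = m), s j := by
      rw [Finset.sum_filter, Finset.sum_filter, Finset.sum_filter, ← Finset.sum_add_distrib]
      apply Finset.sum_congr rfl
      intro x _
      by_cases hx : part x < m <;> by_cases hx2 : part x = m <;>
        simp [hx, hx2] <;> omega
    rw [key, h1, h2]; ring

/-- The `A`-block edge set (last component of `redEdges`). -/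
noncomputable def E7 (n T k : ℕ) (s : ℕ → ℕ) : Finset (ℕ × ℕ) :=
  (Finset.range (3 * n)).biUnion fun i =>
    (Finset.range (n * s i)).image fun j => (vA k n T s i j, yu i)

lemma vA_inj (n T k : ℕ) (s : ℕ → ℕ) (i : ℕ) :
    Function.Injective (fun j => (vA k n T s i j, yu i)) := by
  intro a b hab
  simp only [Prod.mk.injEq, vA] at hab
  omega

lemma cardE7 (n T k : ℕ) (s : ℕ → ℕ) (p : ℕ × ℕ → Prop) [DecidablePred p]
    (cond : ℕ → Prop) [DecidablePred cond]
    (h : ∀ i j, i < 3*n → j < n * s i → (p (vA k n T s i j, yu i) ↔ cond i)) :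
    ((E7 n T k s).filter p).card = ∑ i ∈ (Finset.range (3*n)).filter cond, n * s i := by
  unfold E7
  rw [Finset.filter_biUnion, Finset.card_biUnion]
  · have : ∀ i ∈ range (3*n),
        (((range (n * s i)).image fun j => (vA k n T s i j, yu i)).filter p).card
          = if cond i then n * s i else 0 := by
      intro i hi
      rw [Finset.filter_image]
      by_cases hc : cond i
      · rw [Finset.filter_true_of_mem, Finset.card_image_of_injective _ (vA_inj n T k s i),
          Finset.card_range, if_pos hc]
        intro j hj
        exact (h i j (mem_range.1 hi) (mem_range.1 hj)).2 hc
      · rw [Finset.filter_false_of_mem, if_neg hc]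
        · simp
        · intro j hj
          exact fun hp => hc ((h i j (mem_range.1 hi) (mem_range.1 hj)).1 hp)
    rw [Finset.sum_congr rfl this, ← Finset.sum_filter]
  · intro x hx y hy hxy
    rw [Function.onFun, Finset.disjoint_left]
    intro a ha ha'
    have h1 : a.2 = yu x := by
      simp only [Finset.mem_filter, Finset.mem_image] at ha
      obtain ⟨⟨j, _, rfl⟩, _⟩ := ha; rfl
    have h2 : a.2 = yu y := by
      simp only [Finset.mem_filter, Finset.mem_image] at ha'
      obtain ⟨⟨j, _, rfl⟩, _⟩ := ha'; rfl
    rw [h1] at h2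
    exact hxy (by simpa [yu] using h2)

lemma cardE7full (n T k : ℕ) (s : ℕ → ℕ)
    (hsum : ∑ j ∈ Finset.range (3 * n), s j = n * T) :
    (E7 n T k s).card = n * (n * T) := by
  have := cardE7 n T k s (fun _ => True) (fun _ => True) (by simp)
  simp only [Finset.filter_true_of_mem (fun _ _ => trivial)] at this
  rw [this, ← Finset.mul_sum, hsum]

noncomputable def E1 (k : ℕ) : Finset (ℕ × ℕ) :=
  (Finset.range (k + 1)).image fun j => (vB j, yl)
noncomputable def E2 (n T k : ℕ) : Finset (ℕ × ℕ) :=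
  ((Finset.range (n - 1)) ×ˢ (Finset.range (n * T))).image fun q => (vQ k n T q.1 q.2, yl)
noncomputable def E3 (n T k : ℕ) : Finset (ℕ × ℕ) :=
  ((Finset.range (n - 1)) ×ˢ (Finset.range (n * T))).image fun q => (vQ'' k n T q.1 q.2, yr n)
noncomputable def E4 (n T k : ℕ) : Finset (ℕ × ℕ) :=
  (Finset.range (k + 1)).image fun j => (vB'' k n T j, yr n)
noncomputable def E5 (n T k : ℕ) : Finset (ℕ × ℕ) :=
  (Finset.range (n - 1)).image fun i => (vP k n T i, yp n i)
noncomputable def E6 (n T k : ℕ) : Finset (ℕ × ℕ) :=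
  (Finset.range (n - 1)).image fun i => (vP'' k n T i, yp n i)

lemma redEdges_eq (n T k : ℕ) (s : ℕ → ℕ) :
    redEdges n T k s = E1 k ∪ E2 n T k ∪ E3 n T k ∪ E4 n T k ∪ E5 n T k ∪ E6 n T k ∪ E7 n T k s := rfl

section
open Finset

variable (n T k : ℕ) (s part posY : ℕ → ℕ)

/-- X-order facts. -/
lemma vP_lt_baseA {i : ℕ} (hi : i < n - 1) : vP k n T i < baseA k n T := by
  have := band (M := n*T+1) (j := 0) (hj := by omega) (hii' := hi)
  unfold vP baseA; omega

lemma baseA_le_vA (i j : ℕ) : baseA k n T ≤ vA k n T s i j := by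
  unfold vA; omega

lemma vA_lt_baseQ'' (hsum : ∑ j ∈ Finset.range (3 * n), s j = n * T)
    {i j : ℕ} (hi : i < 3 * n) (hj : j < n * s i) :
    vA k n T s i j < baseQ'' k n T := by
  have hsub : ∑ i' ∈ range (i+1), s i' ≤ n * T := by
    rw [← hsum]
    exact Finset.sum_le_sum_of_subset (Finset.range_subset_range.2 (by omega))
  have h1 : n * (∑ i' ∈ range i, s i') + j < n * (∑ i' ∈ range (i+1), s i') := by
    rw [Finset.sum_range_succ, Nat.mul_add]; omega
  have h2 : n * (∑ i' ∈ range (i+1), s i') ≤ n * (n * T) :=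
    Nat.mul_le_mul_left n hsub
  have h3 : n * n * T = n * (n * T) := by ring
  unfold vA baseQ''; omega

lemma baseQ''_le_vQ'' (i j : ℕ) : baseQ'' k n T ≤ vQ'' k n T i j := by
  unfold vQ''; omega

lemma baseQ''_le_vP'' (i : ℕ) : baseQ'' k n T ≤ vP'' k n T i := by
  unfold vP''; omega

lemma vP''_lt_baseB'' {i : ℕ} (hi : i < n - 1) : vP'' k n T i < baseB'' k n T := by
  have := band (M := n*T+1) (j := n*T) (i := i) (i' := n-1) (hj := by omega) (hii' := hi)
  unfold vP'' baseB''; omega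

lemma vQ''_lt_baseB'' {i j : ℕ} (hi : i < n - 1) (hj : j < n * T) :
    vQ'' k n T i j < baseB'' k n T := by
  have := band (M := n*T+1) (j := j) (i := i) (i' := n-1) (hj := by omega) (hii' := hi)
  unfold vQ'' baseB''; omega

lemma baseB''_le_vB'' (j : ℕ) : baseB'' k n T ≤ vB'' k n T j := by
  unfold vB''; omega

lemma vP_mono {a b : ℕ} (h : a < b) : vP k n T a < vP k n T b := by
  have := band (M := n*T+1) (j := 0) (hj := by omega) (hii' := h)
  unfold vP; omega

lemma vQ_lt_vP {a b i : ℕ} (hb : b < n * T) (h : a < i) :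
    vQ k n T a b < vP k n T i := by
  have := band (M := n*T+1) (j := b+1) (i := a) (i' := i) (hj := by omega) (hii' := h)
  unfold vQ vP; omega

lemma vP_le_vQ {a b i : ℕ} (h : i ≤ a) : vP k n T i < vQ k n T a b := by
  have : i * (n*T+1) ≤ a * (n*T+1) := Nat.mul_le_mul_right _ h
  unfold vQ vP; omega

lemma vQ''_lt_vP'' {a b i : ℕ} (hb : b < n * T) (h : a ≤ i) :
    vQ'' k n T a b < vP'' k n T i := by
  have : a * (n*T+1) ≤ i * (n*T+1) := Nat.mul_le_mul_right _ h
  unfold vQ'' vP''; omega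

lemma vP''_lt_vQ'' {a b i : ℕ} (h : i < a) : vP'' k n T i < vQ'' k n T a b := by
  have := band (M := n*T+1) (j := n*T) (i := i) (i' := a) (hj := by omega) (hii' := h)
  unfold vQ'' vP''; omega

lemma vP''_mono {a b : ℕ} (h : a < b) : vP'' k n T a < vP'' k n T b := by
  have := band (M := n*T+1) (j := n*T) (hj := by omega) (hii' := h)
  unfold vP''; omega

/-- Exact crossing count for the edge `(pᵢ, p'ᵢ)`. -/
lemma countP (hn : 1 ≤ n)
    (hsum : ∑ j ∈ Finset.range (3 * n), s j = n * T)
    (hTsum : ∀ i, i < n →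
      ∑ j ∈ (Finset.range (3 * n)).filter (fun j => part j = i), s j = T)
    (H1 : ∀ i, i < n - 1 → posY yl < posY (yp n i))
    (H2 : ∀ i, i < n - 1 → posY (yp n i) < posY (yr n))
    (H5 : ∀ j i, j < 3 * n → i < n - 1 → (posY (yu j) < posY (yp n i) ↔ part j ≤ i))
    (H7 : ∀ i i', i < n - 1 → i' < n - 1 →
      (posY (yp n i) < posY (yp n i') ↔ i < i'))
    (i : ℕ) (hi : i < n - 1) :
    redCrN n T k s posY (vP k n T i, yp n i) = n ^ 2 * T + i := by
  classical
  set p := redCross posY (vP k n T i, yp n i) with hp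
  have hpiff : ∀ x y, p (x, y) ↔ ((vP k n T i < x ∧ posY y < posY (yp n i)) ∨
        (x < vP k n T i ∧ posY (yp n i) < posY y)) := fun x y => Iff.rfl
  have hPA := vP_lt_baseA n T k hi
  -- empty parts
  have e1 : (E1 k).filter p = ∅ := by
    rw [Finset.filter_eq_empty_iff]
    rintro f hf
    simp only [E1, mem_image, mem_range] at hf
    obtain ⟨j, hj, rfl⟩ := hf
    rw [hpiff]
    have h1 := H1 i hi
    have h2 : vB j = j := rfl
    have h3 : k + 1 ≤ vP k n T i := by unfold vP; omega
    omega
  have e3 : (E3 n T k).filter p = ∅ := by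
    rw [Finset.filter_eq_empty_iff]
    rintro f hf
    simp only [E3, mem_image, mem_product, mem_range, Prod.exists] at hf
    obtain ⟨a, b, hab, rfl⟩ := hf
    have h2 := H2 i hi
    have h3 := baseQ''_le_vQ'' n T k a b
    have h4 := baseA_le_vA n T k s 0 0
    have h5 : baseA k n T ≤ baseQ'' k n T := by unfold baseQ''; omega
    rw [hpiff]
    omega
  have e4 : (E4 n T k).filter p = ∅ := by
    rw [Finset.filter_eq_empty_iff]
    rintro f hf
    simp only [E4, mem_image, mem_range] at hf
    obtain ⟨j, hj, rfl⟩ := hf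
    have h2 := H2 i hi
    have h3 := baseB''_le_vB'' n T k j
    have h5 : baseA k n T ≤ baseB'' k n T := by unfold baseB'' baseQ''; omega
    rw [hpiff]
    omega
  have e5 : (E5 n T k).filter p = ∅ := by
    rw [Finset.filter_eq_empty_iff]
    rintro f hf
    simp only [E5, mem_image, mem_range] at hf
    obtain ⟨a, ha, rfl⟩ := hf
    rw [hpiff]
    rintro (⟨h1, h2⟩ | ⟨h1, h2⟩)
    · have := (H7 a i ha hi).1 h2
      have := vP_mono n T k this
      omega
    · have := (H7 i a hi ha).1 h2
      have := vP_mono n T k this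
      omega
  -- counts
  have c2 : ((E2 n T k).filter p).card = (n - 1 - i) * (n * T) := by
    unfold E2
    rw [Finset.filter_image]
    have hset : ((range (n-1) ×ˢ range (n*T)).filter
          (fun q => p (vQ k n T q.1 q.2, yl)))
        = ((range (n-1)).filter (fun a => i ≤ a)) ×ˢ range (n*T) := by
      ext ⟨a, b⟩
      simp only [mem_filter, mem_product, mem_range]
      constructor
      · rintro ⟨⟨ha, hb⟩, hpf⟩
        refine ⟨⟨ha, ?_⟩, hb⟩
        rw [hpiff] at hpf
        by_contra hcon
        push_neg at hcon
        have h1 := vQ_lt_vP n T k hb hcon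
        have h2 := H1 i hi
        omega
      · rintro ⟨⟨ha, hia⟩, hb⟩
        refine ⟨⟨ha, hb⟩, ?_⟩
        rw [hpiff]
        have h1 := vP_le_vQ n T k (a := a) (b := b) hia
        have h2 := H1 i hi
        omega
    rw [hset, Finset.card_image_of_injOn, Finset.card_product, Finset.card_range]
    · have : (range (n-1)).filter (fun a => i ≤ a) = Ico i (n-1) := by
        ext a; simp [Finset.mem_Ico]; omega
      rw [this, Nat.card_Ico]
    · rintro ⟨a, b⟩ hab ⟨a', b'⟩ hab' heq
      simp only [coe_product, Set.mem_prod, mem_coe, mem_filter, mem_range] at hab hab'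
      simp only [Prod.mk.injEq] at heq
      have heq1 : a * (n*T+1) + (b+1) = a' * (n*T+1) + (b'+1) := by
        have := heq.1; unfold vQ vP at this; omega
      have := pairinj (M := n*T+1) (by omega : b+1 < n*T+1) (by omega : b'+1 < n*T+1) heq1
      simp only [Prod.mk.injEq]
      omega
  have c6 : ((E6 n T k).filter p).card = i := by
    unfold E6
    rw [Finset.filter_image]
    have hset : ((range (n-1)).filter (fun a => p (vP'' k n T a, yp n a))) = range i := by
      ext a
      simp only [mem_filter, mem_range]
      constructor
      · rintro ⟨ha, hpf⟩
        rw [hpiff] at hpf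
        have h3 := baseQ''_le_vP'' n T k a
        have h4 := baseA_le_vA n T k s 0 0
        have h5 : baseA k n T ≤ baseQ'' k n T := by unfold baseQ''; omega
        have h6 : posY (yp n a) < posY (yp n i) := by omega
        exact (H7 a i ha hi).1 h6
      · intro ha
        have ha' : a < n - 1 := by omega
        refine ⟨ha', ?_⟩
        rw [hpiff]
        have h3 := baseQ''_le_vP'' n T k a
        have h5 : baseA k n T ≤ baseQ'' k n T := by unfold baseQ''; omega
        have h6 := (H7 a i ha' hi).2 ha
        omega
    rw [hset, Finset.card_image_of_injOn, Finset.card_range]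
    rintro a _ a' _ heq
    simp only [Prod.mk.injEq] at heq
    have := vP''_mono n T k (a := a) (b := a')
    have := vP''_mono n T k (a := a') (b := a)
    by_contra hne
    rcases Nat.lt_or_ge a a' with h | h
    · have := vP''_mono n T k h; omega
    · have : a' < a := by omega
      have := vP''_mono n T k this; omega
  have c7 : ((E7 n T k s).filter p).card = n * ((i+1) * T) := by
    rw [cardE7 n T k s p (fun i' => part i' ≤ i)]
    · have hset : (range (3*n)).filter (fun i' => part i' ≤ i)
          = (range (3*n)).filter (fun i' => part i' < i + 1) := by
        apply Finset.filter_congr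
        intro x _
        constructor <;> omega
      rw [hset, ← Finset.mul_sum, sum_part_lt n T s part hTsum (i+1) (by omega)]
    · intro a j ha hj
      rw [hpiff]
      have h1 := baseA_le_vA n T k s a j
      have h2 := H5 a i ha hi
      constructor
      · rintro (⟨_, h⟩ | ⟨h, _⟩)
        · exact h2.1 h
        · omega
      · intro h
        exact Or.inl ⟨by omega, h2.2 h⟩
  -- assemble
  rw [redCrN, redEdges_eq]
  simp only [Finset.filter_union]
  rw [e1, e3, e4, e5]
  simp only [Finset.empty_union, Finset.union_empty]
  have d26 : Disjoint ((E2 n T k).filter p) ((E6 n T k).filter p) := by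
    rw [Finset.disjoint_left]
    rintro f hf hf'
    simp only [E2, E6, mem_filter, mem_image, mem_product, mem_range] at hf hf'
    obtain ⟨⟨⟨a, b⟩, _, rfl⟩, _⟩ := hf
    obtain ⟨⟨a', _, heq⟩, _⟩ := hf'
    have := congrArg Prod.snd heq
    simp only [yl, yp] at this
    omega
  have d267 : Disjoint ((E2 n T k).filter p ∪ (E6 n T k).filter p)
      ((E7 n T k s).filter p) := by
    rw [Finset.disjoint_left]
    rintro f hf hf'
    simp only [E2, E6, E7, mem_filter, mem_image, mem_union, mem_product,
      mem_range, mem_biUnion] at hf hf'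
    obtain ⟨⟨a', ha', ⟨j', hj', heq⟩⟩, _⟩ := hf'
    rcases hf with ⟨⟨⟨a, b⟩, _, rfl⟩, _⟩ | ⟨⟨a, ha, rfl⟩, _⟩
    · have := congrArg Prod.snd heq
      simp only [yl, yu] at this
      omega
    · have := congrArg Prod.snd heq
      simp only [yp, yu] at this
      omega
  rw [Finset.card_union_of_disjoint d267, Finset.card_union_of_disjoint d26,
    c2, c6, c7]
  have hsplit : (n - 1 - i) + (i + 1) = n := by omega
  calc (n - 1 - i) * (n * T) + i + n * ((i + 1) * T)
      = ((n - 1 - i) + (i + 1)) * (n * T) + i := by ring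
    _ = n * (n * T) + i := by rw [hsplit]
    _ = n ^ 2 * T + i := by ring


lemma vQ_lt_baseA {a b : ℕ} (ha : a < n - 1) (hb : b < n * T) :
    vQ k n T a b < baseA k n T := by
  have := band (M := n*T+1) (j := b+1) (i := a) (i' := n-1) (hj := by omega) (hii' := ha)
  unfold vQ vP baseA; omega

lemma mem_redEdges {f : ℕ × ℕ} (h : f ∈ redEdges n T k s) :
    (∃ j, j ≤ k ∧ f = (vB j, yl)) ∨
    (∃ a b, a < n-1 ∧ b < n*T ∧ f = (vQ k n T a b, yl)) ∨
    (∃ a b, a < n-1 ∧ b < n*T ∧ f = (vQ'' k n T a b, yr n)) ∨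
    (∃ j, j ≤ k ∧ f = (vB'' k n T j, yr n)) ∨
    (∃ a, a < n-1 ∧ f = (vP k n T a, yp n a)) ∨
    (∃ a, a < n-1 ∧ f = (vP'' k n T a, yp n a)) ∨
    (∃ a b, a < 3*n ∧ b < n * s a ∧ f = (vA k n T s a b, yu a)) := by
  rw [redEdges_eq] at h
  simp only [E1, E2, E3, E4, E5, E6, E7, Finset.mem_union, Finset.mem_image,
    Finset.mem_product, Finset.mem_biUnion, Finset.mem_range, Prod.exists] at h
  rcases h with ((((((⟨j, hj, he⟩ | ⟨a, b, hab, he⟩) | ⟨a, b, hab, he⟩) | ⟨j, hj, he⟩)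
      | ⟨a, ha, he⟩) | ⟨a, ha, he⟩) | ⟨a, ha, b, hb, he⟩)
  · exact Or.inl ⟨j, by omega, he.symm⟩
  · exact Or.inr (Or.inl ⟨a, b, hab.1, hab.2, he.symm⟩)
  · exact Or.inr (Or.inr (Or.inl ⟨a, b, hab.1, hab.2, he.symm⟩))
  · exact Or.inr (Or.inr (Or.inr (Or.inl ⟨j, by omega, he.symm⟩)))
  · exact Or.inr (Or.inr (Or.inr (Or.inr (Or.inl ⟨a, ha, he.symm⟩))))
  · exact Or.inr (Or.inr (Or.inr (Or.inr (Or.inr (Or.inl ⟨a, ha, he.symm⟩)))))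
  · exact Or.inr (Or.inr (Or.inr (Or.inr (Or.inr (Or.inr ⟨a, b, ha, hb, he.symm⟩)))))

lemma cardE5_le : (E5 n T k).card ≤ n - 1 :=
  le_trans Finset.card_image_le (le_of_eq (Finset.card_range _))

lemma cardE6_le : (E6 n T k).card ≤ n - 1 :=
  le_trans Finset.card_image_le (le_of_eq (Finset.card_range _))

/-- Crossing bound for edges incident to `l`. -/
lemma countL (x : ℕ) (hx : x < baseA k n T)
    (H1 : ∀ i, i < n - 1 → posY yl < posY (yp n i))
    (H3 : ∀ j, j < 3 * n → posY yl < posY (yu j))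
    (H8 : posY yl < posY (yr n)) :
    redCrN n T k s posY (x, yl) ≤ n - 1 := by
  classical
  rw [redCrN]
  refine le_trans (Finset.card_le_card ?_) (cardE5_le n T k)
  intro f hf
  rw [Finset.mem_filter] at hf
  obtain ⟨hmem, hpf⟩ := hf
  have hpiff : ∀ a b : ℕ, redCross posY (x, yl) (a, b) ↔
      ((x < a ∧ posY b < posY yl) ∨ (a < x ∧ posY yl < posY b)) := fun _ _ => Iff.rfl
  have hAQ : baseA k n T ≤ baseQ'' k n T := by unfold baseQ''; omega
  have hQB : baseQ'' k n T ≤ baseB'' k n T := by unfold baseB''; omega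
  rcases mem_redEdges n T k s hmem with ⟨j, hj, rfl⟩ | ⟨a, b, ha, hb, rfl⟩ |
    ⟨a, b, ha, hb, rfl⟩ | ⟨j, hj, rfl⟩ | ⟨a, ha, rfl⟩ | ⟨a, ha, rfl⟩ | ⟨a, b, ha, hb, rfl⟩
  · rw [hpiff] at hpf; omega
  · rw [hpiff] at hpf; omega
  · exfalso; rw [hpiff] at hpf
    have := baseQ''_le_vQ'' n T k a b
    omega
  · exfalso; rw [hpiff] at hpf
    have := baseB''_le_vB'' n T k j
    omega
  · exact Finset.mem_image.2 ⟨a, Finset.mem_range.2 ha, rfl⟩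
  · exfalso; rw [hpiff] at hpf
    have := baseQ''_le_vP'' n T k a
    have := H1 a ha
    omega
  · exfalso; rw [hpiff] at hpf
    have := baseA_le_vA n T k s a b
    have := H3 a ha
    omega

/-- Crossing bound for edges incident to `r`. -/
lemma countR (x : ℕ) (hx : baseQ'' k n T ≤ x)
    (hsum : ∑ j ∈ Finset.range (3 * n), s j = n * T)
    (H2 : ∀ i, i < n - 1 → posY (yp n i) < posY (yr n))
    (H4 : ∀ j, j < 3 * n → posY (yu j) < posY (yr n))
    (H8 : posY yl < posY (yr n)) :
    redCrN n T k s posY (x, yr n) ≤ n - 1 := by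
  classical
  rw [redCrN]
  refine le_trans (Finset.card_le_card ?_) (cardE6_le n T k)
  intro f hf
  rw [Finset.mem_filter] at hf
  obtain ⟨hmem, hpf⟩ := hf
  have hpiff : ∀ a b : ℕ, redCross posY (x, yr n) (a, b) ↔
      ((x < a ∧ posY b < posY (yr n)) ∨ (a < x ∧ posY (yr n) < posY b)) := fun _ _ => Iff.rfl
  have hAQ : baseA k n T ≤ baseQ'' k n T := by unfold baseQ''; omega
  have hkA : k + 1 ≤ baseA k n T := by unfold baseA; omega
  rcases mem_redEdges n T k s hmem with ⟨j, hj, rfl⟩ | ⟨a, b, ha, hb, rfl⟩ |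
    ⟨a, b, ha, hb, rfl⟩ | ⟨j, hj, rfl⟩ | ⟨a, ha, rfl⟩ | ⟨a, ha, rfl⟩ | ⟨a, b, ha, hb, rfl⟩
  · exfalso; rw [hpiff] at hpf
    have : vB j = j := rfl
    omega
  · exfalso; rw [hpiff] at hpf
    have := vQ_lt_baseA n T k ha hb
    omega
  · exfalso; rw [hpiff] at hpf; omega
  · exfalso; rw [hpiff] at hpf; omega
  · exfalso; rw [hpiff] at hpf
    have := vP_lt_baseA n T k ha
    have := H2 a ha
    omega
  · exact Finset.mem_image.2 ⟨a, Finset.mem_range.2 ha, rfl⟩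
  · exfalso; rw [hpiff] at hpf
    have := vA_lt_baseQ'' n T k s hsum ha hb
    have := H4 a ha
    omega

/-- Crossing bound for edges incident to `uᵢ`. -/
lemma countU (i j : ℕ) (hi : i < 3 * n) (hj : j < n * s i)
    (hsum : ∑ j ∈ Finset.range (3 * n), s j = n * T)
    (H3 : ∀ j, j < 3 * n → posY yl < posY (yu j))
    (H4 : ∀ j, j < 3 * n → posY (yu j) < posY (yr n)) :
    redCrN n T k s posY (vA k n T s i j, yu i)
      ≤ (n - 1) + (n - 1) + (n * (n * T) - n * s i) := by
  classical
  rw [redCrN]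
  have hsub : (redEdges n T k s).filter (redCross posY (vA k n T s i j, yu i))
      ⊆ E5 n T k ∪ E6 n T k ∪ ((E7 n T k s) \
        ((Finset.range (n * s i)).image fun j' => (vA k n T s i j', yu i))) := by
    intro f hf
    rw [Finset.mem_filter] at hf
    obtain ⟨hmem, hpf⟩ := hf
    have hpiff : ∀ a b : ℕ, redCross posY (vA k n T s i j, yu i) (a, b) ↔
        ((vA k n T s i j < a ∧ posY b < posY (yu i)) ∨
          (a < vA k n T s i j ∧ posY (yu i) < posY b)) := fun _ _ => Iff.rfl
    have hAe := baseA_le_vA n T k s i j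
    have heQ := vA_lt_baseQ'' n T k s hsum hi hj
    have hQB : baseQ'' k n T ≤ baseB'' k n T := by unfold baseB''; omega
    have hkA : k + 1 ≤ baseA k n T := by unfold baseA; omega
    rcases mem_redEdges n T k s hmem with ⟨a, ha, rfl⟩ | ⟨a, b, ha, hb, rfl⟩ |
      ⟨a, b, ha, hb, rfl⟩ | ⟨a, ha, rfl⟩ | ⟨a, ha, rfl⟩ | ⟨a, ha, rfl⟩ | ⟨a, b, ha, hb, rfl⟩
    · exfalso; rw [hpiff] at hpf
      have : vB a = a := rfl
      have := H3 i hi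
      omega
    · exfalso; rw [hpiff] at hpf
      have := vQ_lt_baseA n T k ha hb
      have := H3 i hi
      omega
    · exfalso; rw [hpiff] at hpf
      have := baseQ''_le_vQ'' n T k a b
      have := H4 i hi
      omega
    · exfalso; rw [hpiff] at hpf
      have := baseB''_le_vB'' n T k a
      have := H4 i hi
      omega
    · exact Finset.mem_union.2 (Or.inl (Finset.mem_union.2 (Or.inl
        (Finset.mem_image.2 ⟨a, Finset.mem_range.2 ha, rfl⟩))))
    · exact Finset.mem_union.2 (Or.inl (Finset.mem_union.2 (Or.inr
        (Finset.mem_image.2 ⟨a, Finset.mem_range.2 ha, rfl⟩))))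
    · refine Finset.mem_union.2 (Or.inr (Finset.mem_sdiff.2 ⟨?_, ?_⟩))
      · exact Finset.mem_biUnion.2 ⟨a, Finset.mem_range.2 ha,
          Finset.mem_image.2 ⟨b, Finset.mem_range.2 hb, rfl⟩⟩
      · intro hcon
        rw [Finset.mem_image] at hcon
        obtain ⟨b', _, heq⟩ := hcon
        have h2 : yu a = yu i := congrArg Prod.snd heq.symm
        rw [hpiff] at hpf
        rw [h2] at hpf
        omega
  refine le_trans (Finset.card_le_card hsub) ?_
  refine le_trans (Finset.card_union_le _ _) ?_
  have h1 := Finset.card_union_le (E5 n T k) (E6 n T k)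
  have h2 : ((E7 n T k s) \
      ((Finset.range (n * s i)).image fun j' => (vA k n T s i j', yu i))).card
      = n * (n * T) - n * s i := by
    rw [Finset.card_sdiff_of_subset, cardE7full n T k s hsum,
      Finset.card_image_of_injective _ (vA_inj n T k s i), Finset.card_range]
    intro f hf
    exact Finset.mem_biUnion.2 ⟨i, Finset.mem_range.2 hi, hf⟩
  rw [h2]
  have := cardE5_le n T k
  have := cardE6_le n T k
  omega


/-- Crossing bound for the edge `(p''ᵢ, p'ᵢ)`. -/
lemma countP'' (hn : 1 ≤ n)
    (hsum : ∑ j ∈ Finset.range (3 * n), s j = n * T)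
    (hTsum : ∀ i, i < n →
      ∑ j ∈ (Finset.range (3 * n)).filter (fun j => part j = i), s j = T)
    (H1 : ∀ i, i < n - 1 → posY yl < posY (yp n i))
    (H2 : ∀ i, i < n - 1 → posY (yp n i) < posY (yr n))
    (H6 : ∀ j i, j < 3 * n → i < n - 1 → (posY (yp n i) < posY (yu j) ↔ i < part j))
    (H7 : ∀ i i', i < n - 1 → i' < n - 1 →
      (posY (yp n i) < posY (yp n i') ↔ i < i'))
    (i : ℕ) (hi : i < n - 1) :
    redCrN n T k s posY (vP'' k n T i, yp n i) ≤ n ^ 2 * T + (n - 1) := by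
  classical
  rw [redCrN]
  have hpiff : ∀ a b : ℕ, redCross posY (vP'' k n T i, yp n i) (a, b) ↔
      ((vP'' k n T i < a ∧ posY b < posY (yp n i)) ∨
        (a < vP'' k n T i ∧ posY (yp n i) < posY b)) := fun _ _ => Iff.rfl
  have hAQ : baseA k n T ≤ baseQ'' k n T := by unfold baseQ''; omega
  have hkA : k + 1 ≤ baseA k n T := by unfold baseA; omega
  have hQe := baseQ''_le_vP'' n T k i
  have heB := vP''_lt_baseB'' n T k hi
  have hsub : (redEdges n T k s).filter (redCross posY (vP'' k n T i, yp n i))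
      ⊆ ((E3 n T k).filter (fun f => f.1 < vP'' k n T i)) ∪ E5 n T k ∪
        ((E7 n T k s).filter (fun f => posY (yp n i) < posY f.2)) := by
    intro f hf
    rw [Finset.mem_filter] at hf
    obtain ⟨hmem, hpf⟩ := hf
    rcases mem_redEdges n T k s hmem with ⟨a, ha, rfl⟩ | ⟨a, b, ha, hb, rfl⟩ |
      ⟨a, b, ha, hb, rfl⟩ | ⟨a, ha, rfl⟩ | ⟨a, ha, rfl⟩ | ⟨a, ha, rfl⟩ | ⟨a, b, ha, hb, rfl⟩
    · exfalso; rw [hpiff] at hpf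
      have : vB a = a := rfl
      have := H1 i hi
      omega
    · exfalso; rw [hpiff] at hpf
      have := vQ_lt_baseA n T k ha hb
      have := H1 i hi
      omega
    · refine Finset.mem_union.2 (Or.inl (Finset.mem_union.2 (Or.inl ?_)))
      rw [Finset.mem_filter]
      refine ⟨Finset.mem_image.2 ⟨(a, b), Finset.mem_product.2
        ⟨Finset.mem_range.2 ha, Finset.mem_range.2 hb⟩, rfl⟩, ?_⟩
      rw [hpiff] at hpf
      have := H2 i hi
      simp only
      omega
    · exfalso; rw [hpiff] at hpf
      have := baseB''_le_vB'' n T k a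
      have := H2 i hi
      omega
    · exact Finset.mem_union.2 (Or.inl (Finset.mem_union.2 (Or.inr
        (Finset.mem_image.2 ⟨a, Finset.mem_range.2 ha, rfl⟩))))
    · exfalso; rw [hpiff] at hpf
      rcases hpf with ⟨h1, h2⟩ | ⟨h1, h2⟩
      · have := (H7 a i ha hi).1 h2
        have := vP''_mono n T k (a := a) (b := i) this
        omega
      · have := (H7 i a hi ha).1 h2
        have := vP''_mono n T k (a := i) (b := a) this
        omega
    · refine Finset.mem_union.2 (Or.inr ?_)
      rw [Finset.mem_filter]
      refine ⟨Finset.mem_biUnion.2 ⟨a, Finset.mem_range.2 ha,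
        Finset.mem_image.2 ⟨b, Finset.mem_range.2 hb, rfl⟩⟩, ?_⟩
      rw [hpiff] at hpf
      have := vA_lt_baseQ'' n T k s hsum ha hb
      simp only
      omega
  refine le_trans (Finset.card_le_card hsub) ?_
  refine le_trans (Finset.card_union_le _ _) ?_
  refine le_trans (Nat.add_le_add_right (Finset.card_union_le _ _) _) ?_
  -- card of restricted E3
  have c3 : ((E3 n T k).filter (fun f => f.1 < vP'' k n T i)).card
      = (i + 1) * (n * T) := by
    unfold E3
    rw [Finset.filter_image]
    have hset : ((Finset.range (n-1) ×ˢ Finset.range (n*T)).filter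
          (fun q => ((vQ'' k n T q.1 q.2, yr n) : ℕ × ℕ).1 < vP'' k n T i))
        = (Finset.range (i+1)) ×ˢ Finset.range (n*T) := by
      ext ⟨a, b⟩
      simp only [Finset.mem_filter, Finset.mem_product, Finset.mem_range]
      constructor
      · rintro ⟨⟨ha, hb⟩, hlt⟩
        refine ⟨?_, hb⟩
        by_contra hcon
        have := vP''_lt_vQ'' n T k (a := a) (b := b) (i := i) (by omega)
        omega
      · rintro ⟨ha, hb⟩
        have h1 := vQ''_lt_vP'' n T k (a := a) (b := b) (i := i) hb (by omega)
        exact ⟨⟨by omega, hb⟩, h1⟩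
    rw [hset, Finset.card_image_of_injOn, Finset.card_product, Finset.card_range,
      Finset.card_range]
    rintro ⟨a, b⟩ hab ⟨a', b'⟩ hab' heq
    simp only [Finset.coe_product, Set.mem_prod, Finset.mem_coe,
      Finset.mem_range] at hab hab'
    simp only [Prod.mk.injEq] at heq
    have heq1 : a * (n*T+1) + b = a' * (n*T+1) + b' := by
      have := heq.1; unfold vQ'' at this; omega
    have := pairinj (M := n*T+1) (by omega : b < n*T+1) (by omega : b' < n*T+1) heq1
    simp only [Prod.mk.injEq]
    omega
  -- card of restricted E7
  have c7 : ((E7 n T k s).filter (fun f => posY (yp n i) < posY f.2)).card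
      = n * (∑ j ∈ (Finset.range (3*n)).filter (fun j => ¬ part j < i + 1), s j) := by
    rw [cardE7 n T k s _ (fun a => ¬ part a < i + 1)]
    · rw [← Finset.mul_sum]
    · intro a j ha hj
      have := H6 a i ha hi
      constructor
      · intro h; have := this.1 h; omega
      · intro h; exact this.2 (by omega)
  rw [c3, c7]
  have hS := Finset.sum_filter_add_sum_filter_not (Finset.range (3*n))
    (fun j => part j < i + 1) s
  rw [sum_part_lt n T s part hTsum (i+1) (by omega), hsum] at hS
  have hE5 := cardE5_le n T k
  -- (i+1)*(n*T) + (n-1) + n*S₁ ≤ n^2*T + (n-1)  where (i+1)*T + S₁ = n*T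
  have key : (i + 1) * (n * T) +
      n * (∑ j ∈ (Finset.range (3*n)).filter (fun j => ¬ part j < i + 1), s j)
      ≤ n ^ 2 * T := le_of_eq (by
    set S := ∑ j ∈ (Finset.range (3*n)).filter (fun j => ¬ part j < i + 1), s j
    calc (i + 1) * (n * T) + n * S = n * ((i + 1) * T + S) := by ring
      _ = n * (n * T) := by rw [hS]
      _ = n ^ 2 * T := by ring)
  omega

end

/-- Completeness of the reduction: given a yes-instance of 3-Partition with
distinct elements satisfying `T/4 < s < T/2` (witnessed by a partition `part`
into `n` triplets each summing to `T`), and the drawing placing the free layer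
in the order `l`, `u`-vertices of `S₁`, `p'₁`, `u`-vertices of `S₂`, …,
`p'_{n-1}`, `u`-vertices of `Sₙ`, `r` (encoded by the position map `posY`),
every edge has at most `k = n²T + (n-1)` crossings.  Moreover, edges incident to
`l` or `r` have at most `n - 1` crossings, the edge `(pᵢ, p'ᵢ)` has exactly
`n²T + (i-1)` crossings, and edges incident to a `u`-vertex have at most
`n²T + (n-1)` crossings. -/
theorem reduction_completeness_crossing_bounds
    (n T k : ℕ) (hn : 1 ≤ n) (s : ℕ → ℕ)
    (hspos : ∀ j, j < 3 * n → 0 < s j)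
    (hdist : ∀ j₁, j₁ < 3 * n → ∀ j₂, j₂ < 3 * n → s j₁ = s j₂ → j₁ = j₂)
    (hrange : ∀ j, j < 3 * n → T < 4 * s j ∧ 2 * s j < T)
    (hsum : ∑ j ∈ Finset.range (3 * n), s j = n * T)
    (hk : k = n ^ 2 * T + (n - 1))
    (part : ℕ → ℕ)
    (hpart : ∀ j, j < 3 * n → part j < n)
    (htriple : ∀ i, i < n →
      ((Finset.range (3 * n)).filter (fun j => part j = i)).card = 3)
    (hTsum : ∀ i, i < n →
      ∑ j ∈ (Finset.range (3 * n)).filter (fun j => part j = i), s j = T)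
    (posY : ℕ → ℕ) (hinj : Function.Injective posY)
    (hbnd : ∀ i, i < n → posY (yBnd n i) < posY (yBnd n (i + 1)))
    (hu : ∀ j, j < 3 * n →
      posY (yBnd n (part j)) < posY (yu j) ∧
      posY (yu j) < posY (yBnd n (part j + 1))) :
    (∀ e ∈ redEdges n T k s, redCrN n T k s posY e ≤ k) ∧
    (∀ e ∈ redEdges n T k s, (e.2 = yl ∨ e.2 = yr n) →
      redCrN n T k s posY e ≤ n - 1) ∧
    (∀ i, i < n - 1 →
      redCrN n T k s posY (vP k n T i, yp n i) = n ^ 2 * T + i) ∧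
    (∀ e ∈ redEdges n T k s, (∃ j, j < 3 * n ∧ e.2 = yu j) →
      redCrN n T k s posY e ≤ n ^ 2 * T + (n - 1)) := by
  classical
  have hT3 : 3 ≤ T := by
    have h0 : 0 < 3 * n := by omega
    have h1 := hrange 0 h0
    have h2 := hspos 0 h0
    omega
  have hyBnd0 : yBnd n 0 = yl := by unfold yBnd; rw [if_pos rfl]
  have hyBndn : yBnd n n = yr n := by
    unfold yBnd; rw [if_neg (by omega), if_pos rfl]
  have hyBndi : ∀ i, 0 < i → i < n → yBnd n i = yp n (i - 1) := by
    intro i h1 h2; unfold yBnd; rw [if_neg (by omega), if_neg (by omega)]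
  have bnd_lt : ∀ a b, a < b → b ≤ n → posY (yBnd n a) < posY (yBnd n b) := by
    intro a b
    induction b with
    | zero => omega
    | succ m ih =>
      intro hab hbn
      rcases Nat.lt_or_ge a m with h | h
      · exact lt_trans (ih h (by omega)) (hbnd m (by omega))
      · have : a = m := by omega
        subst this
        exact hbnd a (by omega)
  have bnd_le : ∀ a b, a ≤ b → b ≤ n → posY (yBnd n a) ≤ posY (yBnd n b) := by
    intro a b hab hbn
    rcases Nat.eq_or_lt_of_le hab with h | h
    · rw [h]
    · exact le_of_lt (bnd_lt a b h hbn)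
  have H1 : ∀ i, i < n - 1 → posY yl < posY (yp n i) := by
    intro i hi
    have := bnd_lt 0 (i + 1) (by omega) (by omega)
    rwa [hyBnd0, hyBndi (i + 1) (by omega) (by omega), Nat.add_sub_cancel] at this
  have H2 : ∀ i, i < n - 1 → posY (yp n i) < posY (yr n) := by
    intro i hi
    have := bnd_lt (i + 1) n (by omega) le_rfl
    rwa [hyBndn, hyBndi (i + 1) (by omega) (by omega), Nat.add_sub_cancel] at this
  have H8 : posY yl < posY (yr n) := by
    have := bnd_lt 0 n (by omega) le_rfl
    rwa [hyBnd0, hyBndn] at this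
  have H3 : ∀ j, j < 3 * n → posY yl < posY (yu j) := by
    intro j hj
    have h1 := (hu j hj).1
    have h2 : posY (yBnd n 0) ≤ posY (yBnd n (part j)) :=
      bnd_le 0 (part j) (by omega) (le_of_lt (hpart j hj))
    rw [hyBnd0] at h2
    omega
  have H4 : ∀ j, j < 3 * n → posY (yu j) < posY (yr n) := by
    intro j hj
    have h1 := (hu j hj).2
    have h2 : posY (yBnd n (part j + 1)) ≤ posY (yBnd n n) :=
      bnd_le _ n (hpart j hj) le_rfl
    rw [hyBndn] at h2
    omega
  have H5 : ∀ j i, j < 3 * n → i < n - 1 →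
      (posY (yu j) < posY (yp n i) ↔ part j ≤ i) := by
    intro j i hj hi
    have hyp : yp n i = yBnd n (i + 1) := by
      rw [hyBndi (i + 1) (by omega) (by omega), Nat.add_sub_cancel]
    constructor
    · intro h
      by_contra hcon
      push_neg at hcon
      have h2 : posY (yBnd n (i + 1)) ≤ posY (yBnd n (part j)) :=
        bnd_le _ _ (by omega) (le_of_lt (hpart j hj))
      have h3 := (hu j hj).1
      rw [hyp] at h
      omega
    · intro h
      have h2 : posY (yBnd n (part j + 1)) ≤ posY (yBnd n (i + 1)) :=
        bnd_le _ _ (by omega) (by omega)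
      have h3 := (hu j hj).2
      rw [hyp]
      omega
  have H6 : ∀ j i, j < 3 * n → i < n - 1 →
      (posY (yp n i) < posY (yu j) ↔ i < part j) := by
    intro j i hj hi
    have h5 := H5 j i hj hi
    have hyp : yp n i = yBnd n (i + 1) := by
      rw [hyBndi (i + 1) (by omega) (by omega), Nat.add_sub_cancel]
    constructor
    · intro h
      by_contra hcon
      push_neg at hcon
      have := h5.2 hcon
      omega
    · intro h
      have h2 : posY (yBnd n (i + 1)) ≤ posY (yBnd n (part j)) :=
        bnd_le _ _ (by omega) (le_of_lt (hpart j hj))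
      have h3 := (hu j hj).1
      rw [hyp]
      omega
  have H7 : ∀ i i', i < n - 1 → i' < n - 1 →
      (posY (yp n i) < posY (yp n i') ↔ i < i') := by
    intro i i' hi hi'
    have hyp : ∀ a, a < n - 1 → yp n a = yBnd n (a + 1) := fun a ha => by
      rw [hyBndi (a + 1) (by omega) (by omega), Nat.add_sub_cancel]
    constructor
    · intro h
      by_contra hcon
      push_neg at hcon
      rcases Nat.eq_or_lt_of_le hcon with he | hlt
      · rw [he] at h; omega
      · have := bnd_lt (i' + 1) (i + 1) (by omega) (by omega)
        rw [← hyp i hi, ← hyp i' hi'] at this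
        omega
    · intro h
      have := bnd_lt (i + 1) (i' + 1) (by omega) (by omega)
      rw [← hyp i hi, ← hyp i' hi'] at this
      exact this
  have hU : ∀ a b, a < 3 * n → b < n * s a →
      redCrN n T k s posY (vA k n T s a b, yu a) ≤ n ^ 2 * T + (n - 1) := by
    intro a b ha hb
    have h1 := countU n T k s posY a b ha hb hsum H3 H4
    have h2 : n * 1 ≤ n * s a := Nat.mul_le_mul_left n (hspos a ha)
    have hnT : 1 ≤ n * T := Nat.mul_pos (by omega) (by omega)
    have h3 : n * 1 ≤ n * (n * T) := Nat.mul_le_mul_left n hnT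
    have h4 : n ^ 2 * T = n * (n * T) := by ring
    omega
  refine ⟨?_, ?_, ?_, ?_⟩
  · intro e he
    rcases mem_redEdges n T k s he with ⟨a, ha, rfl⟩ | ⟨a, b, ha, hb, rfl⟩ |
      ⟨a, b, ha, hb, rfl⟩ | ⟨a, ha, rfl⟩ | ⟨a, ha, rfl⟩ | ⟨a, ha, rfl⟩ | ⟨a, b, ha, hb, rfl⟩
    · have h1 : vB a < baseA k n T := by unfold vB baseA; omega
      have := countL n T k s posY (vB a) h1 H1 H3 H8
      omega
    · have := countL n T k s posY _ (vQ_lt_baseA n T k ha hb) H1 H3 H8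
      omega
    · have := countR n T k s posY _ (baseQ''_le_vQ'' n T k a b) hsum H2 H4 H8
      omega
    · have h1 : baseQ'' k n T ≤ vB'' k n T a := by
        have h2 := baseB''_le_vB'' n T k a
        have h3 : baseQ'' k n T ≤ baseB'' k n T := by unfold baseB''; omega
        omega
      have := countR n T k s posY _ h1 hsum H2 H4 H8
      omega
    · have := countP n T k s part posY hn hsum hTsum H1 H2 H5 H7 a ha
      omega
    · have := countP'' n T k s part posY hn hsum hTsum H1 H2 H6 H7 a ha
      omega
    · have := hU a b ha hb
      omega
  · intro e he hor
    rcases mem_redEdges n T k s he with ⟨a, ha, rfl⟩ | ⟨a, b, ha, hb, rfl⟩ |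
      ⟨a, b, ha, hb, rfl⟩ | ⟨a, ha, rfl⟩ | ⟨a, ha, rfl⟩ | ⟨a, ha, rfl⟩ | ⟨a, b, ha, hb, rfl⟩
    · exact countL n T k s posY (vB a) (by unfold vB baseA; omega) H1 H3 H8
    · exact countL n T k s posY _ (vQ_lt_baseA n T k ha hb) H1 H3 H8
    · exact countR n T k s posY _ (baseQ''_le_vQ'' n T k a b) hsum H2 H4 H8
    · refine countR n T k s posY _ ?_ hsum H2 H4 H8
      have h2 := baseB''_le_vB'' n T k a
      have h3 : baseQ'' k n T ≤ baseB'' k n T := by unfold baseB''; omega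
      omega
    · exfalso
      rcases hor with h | h <;> (simp only [yp, yl, yr] at h; omega)
    · exfalso
      rcases hor with h | h <;> (simp only [yp, yl, yr] at h; omega)
    · exfalso
      rcases hor with h | h <;> (simp only [yu, yl, yr] at h; omega)
  · intro i hi
    exact countP n T k s part posY hn hsum hTsum H1 H2 H5 H7 i hi
  · rintro e he ⟨j, hj, hej⟩
    rcases mem_redEdges n T k s he with ⟨a, ha, rfl⟩ | ⟨a, b, ha, hb, rfl⟩ |
      ⟨a, b, ha, hb, rfl⟩ | ⟨a, ha, rfl⟩ | ⟨a, ha, rfl⟩ | ⟨a, ha, rfl⟩ | ⟨a, b, ha, hb, rfl⟩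
    · exfalso; simp only [yl, yu] at hej; omega
    · exfalso; simp only [yl, yu] at hej; omega
    · exfalso; simp only [yr, yu] at hej; omega
    · exfalso; simp only [yr, yu] at hej; omega
    · exfalso; simp only [yp, yu] at hej; omega
    · exfalso; simp only [yp, yu] at hej; omega
    · exact hU a b ha hb
end
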